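/- arXiv:math/0406514 — 14 statements merged into one kernel-verified Lean document; each statement's English description precedes it below -/
import Mathlib

section
/- Let R be a well-mixed difference ring (a commutative ring with an endomorphism σ such that ab = 0 implies a·σ(b) = 0). Then the set I = {a ∈ R : σ^i(a)^m = 0 for some m ≥ 1, i ≥ 0} is an ideal of R closed under σ, and moreover I is perfect: if a·σ(a) ∈ I then a ∈ I. -/
/-!
The set in question is the increasing union of the ideals `(σ^i)⁻¹(nilradical R)`, hence an
ideal, and `σ` maps it into itself because ring homomorphisms preserve nilpotence. For
perfectness, if `(a σ(a))^m = 0` then `σ(a)^m a^m = 0`, and well-mixedness turns this into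
`σ(a)^m σ(a^m) = σ(a)^(2m) = 0`.
-/

theorem isNilpotent_iff_exists_one_le_pow_eq_zero {M : Type*} [MonoidWithZero M] {x : M} :
    IsNilpotent x ↔ ∃ m : ℕ, 1 ≤ m ∧ x ^ m = 0 :=
  ⟨fun ⟨n, hn⟩ ↦ ⟨n + 1, n.succ_pos, by rw [pow_succ, hn, zero_mul]⟩, fun ⟨m, _, hm⟩ ↦ ⟨m, hm⟩⟩

namespace RingHom

variable {R : Type*} [CommRing R] (σ : R →+* R)

def iterateNilIdeal : Ideal R := ⨆ i : ℕ, (nilradical R).comap (σ ^ i)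

theorem monotone_comap_pow_nilradical : Monotone fun i : ℕ ↦ (nilradical R).comap (σ ^ i) :=
  monotone_nat_of_le_succ fun _ _ hx ↦ by
    simpa only [Ideal.mem_comap, mem_nilradical, coe_pow, Function.iterate_succ_apply'] using
      IsNilpotent.map hx σ

variable {σ}

theorem mem_iterateNilIdeal {a : R} :
    a ∈ σ.iterateNilIdeal ↔ ∃ i : ℕ, IsNilpotent ((⇑σ)^[i] a) := by
  simp only [iterateNilIdeal, Submodule.mem_iSup_of_directed _
    (monotone_comap_pow_nilradical σ).directed_le, Ideal.mem_comap, mem_nilradical, coe_pow]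

theorem map_mem_iterateNilIdeal {a : R} (ha : a ∈ σ.iterateNilIdeal) :
    σ a ∈ σ.iterateNilIdeal := by
  obtain ⟨i, hi⟩ := mem_iterateNilIdeal.1 ha
  refine mem_iterateNilIdeal.2 ⟨i, ?_⟩
  rw [← Function.iterate_succ_apply, Function.iterate_succ_apply']
  exact hi.map σ

theorem isNilpotent_map_of_isNilpotent_mul_map (hwm : ∀ a b : R, a * b = 0 → a * σ b = 0)
    {a : R} (ha : IsNilpotent (a * σ a)) : IsNilpotent (σ a) := by
  obtain ⟨m, hm⟩ := ha
  have h : σ a ^ m * a ^ m = 0 := by rw [← mul_pow, mul_comm, hm]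
  exact ⟨m + m, by simpa only [pow_add, map_pow] using hwm _ _ h⟩

theorem mem_iterateNilIdeal_of_mul_map_mem (hwm : ∀ a b : R, a * b = 0 → a * σ b = 0)
    {a : R} (ha : a * σ a ∈ σ.iterateNilIdeal) : a ∈ σ.iterateNilIdeal := by
  obtain ⟨i, hi⟩ := mem_iterateNilIdeal.1 ha
  rw [iterate_map_mul, ← Function.iterate_succ_apply, Function.iterate_succ_apply'] at hi
  refine mem_iterateNilIdeal.2 ⟨i + 1, ?_⟩
  rw [Function.iterate_succ_apply']
  exact isNilpotent_map_of_isNilpotent_mul_map hwm hi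

end RingHom

/-- In a well-mixed difference ring, the set of `a` with `σ^i(a)^m = 0` for some
`m ≥ 1, i ≥ 0` is a σ-closed (difference) ideal, and it is perfect. -/
theorem stmt_0 {R : Type*} [CommRing R] (σ : R →+* R)
    (hwm : ∀ a b : R, a * b = 0 → a * σ b = 0) :
    ∃ I : Ideal R,
      (∀ a : R, a ∈ I ↔ ∃ m i : ℕ, 1 ≤ m ∧ ((⇑σ)^[i] a) ^ m = 0) ∧
      (∀ a ∈ I, σ a ∈ I) ∧
      (∀ a : R, a * σ a ∈ I → a ∈ I) := by
  refine ⟨σ.iterateNilIdeal, fun a ↦ ?_, fun _ ↦ RingHom.map_mem_iterateNilIdeal,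
    fun _ ↦ RingHom.mem_iterateNilIdeal_of_mul_map_mem hwm⟩
  simp only [RingHom.mem_iterateNilIdeal, isNilpotent_iff_exists_one_le_pow_eq_zero]
  exact exists_comm
end

section
/- Let R be a well-mixed difference ring and a ∈ R. Then the annihilator Ann(a) = {b ∈ R : ab = 0} is a well-mixed difference ideal, i.e. it is closed under σ and the quotient R/Ann(a) is well-mixed. Moreover, if I(a) denotes the smallest well-mixed ideal containing a, then every b ∈ I(a) ∩ Ann(a) satisfies b² = 0. -/
/-- The annihilator of `a` as an ideal. -/
def annWMIdeal {R : Type*} [CommRing R] (a : R) : Ideal R where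
  carrier := {b | a * b = 0}
  zero_mem' := by simp
  add_mem' := by
    intro x y hx hy
    simp only [Set.mem_setOf_eq] at *
    rw [mul_add, hx, hy, add_zero]
  smul_mem' := by
    intro c x hx
    simp only [Set.mem_setOf_eq, smul_eq_mul] at *
    rw [mul_comm c x, ← mul_assoc, hx, zero_mul]

lemma annWM_mem {R : Type*} [CommRing R] (a b : R) : b ∈ annWMIdeal a ↔ a * b = 0 := Iff.rfl

/-- In a well-mixed difference ring, `Ann(a)` is a well-mixed difference ideal, and
any `b` in the intersection of `Ann(a)` with the smallest well-mixed ideal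
containing `a` satisfies `b² = 0`. -/
theorem stmt_1 {R : Type*} [CommRing R] (σ : R →+* R)
    (hwm : ∀ a b : R, a * b = 0 → a * σ b = 0) (a : R) :
    ∃ Ann : Ideal R,
      (∀ b : R, b ∈ Ann ↔ a * b = 0) ∧
      (∀ b ∈ Ann, σ b ∈ Ann) ∧
      (∀ b c : R, b * c ∈ Ann → b * σ c ∈ Ann) ∧
      ∀ Ia : Ideal R,
        (a ∈ Ia ∧ (∀ x ∈ Ia, σ x ∈ Ia) ∧ (∀ b c : R, b * c ∈ Ia → b * σ c ∈ Ia) ∧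
          ∀ J : Ideal R,
            (a ∈ J ∧ (∀ x ∈ J, σ x ∈ J) ∧ (∀ b c : R, b * c ∈ J → b * σ c ∈ J)) → Ia ≤ J) →
        ∀ b : R, b ∈ Ia → b ∈ Ann → b ^ 2 = 0 := by
  refine ⟨annWMIdeal a, fun b => Iff.rfl, ?_, ?_, ?_⟩
  · intro b hb
    exact hwm a b hb
  · intro b c hbc
    rw [annWM_mem, ← mul_assoc] at *
    exact hwm (a * b) c hbc
  · rintro Ia ⟨haIa, -, -, hmin⟩ b hbIa hbAnn
    rw [annWM_mem] at hbAnn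
    have hJ : Ia ≤ annWMIdeal b := by
      refine hmin _ ⟨?_, ?_, ?_⟩
      · rw [annWM_mem, mul_comm]; exact hbAnn
      · intro x hx
        exact hwm b x hx
      · intro c d hcd
        rw [annWM_mem, ← mul_assoc] at hcd ⊢
        exact hwm (b * c) d hcd
    have := hJ hbIa
    rw [annWM_mem] at this
    rw [sq]; exact this
end

section
/- Let R be a well-mixed difference domain (well-mixed difference ring with no zero divisors) and a ∈ R. Let J(a) be the smallest algebraically radical well-mixed ideal containing a. Then Ann(a) is an algebraically radical, well-mixed difference ideal, and J(a) ∩ Ann(a) = (0). -/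
/-- In a well-mixed difference domain, `Ann(a)` is an algebraically radical,
well-mixed difference ideal, and its intersection with the smallest
algebraically radical well-mixed ideal `J(a)` containing `a` is `(0)`. -/
theorem stmt_2 {R : Type*} [CommRing R] (σ : R →+* R)
    (hwm : ∀ a b : R, a * b = 0 → a * σ b = 0)
    (hdom : ∀ x y : R, x * y = 0 → x = 0 ∨ y = 0)
    (a : R) (Ja : Ideal R)
    (hJa : a ∈ Ja ∧ (∀ x ∈ Ja, σ x ∈ Ja) ∧ (∀ b c : R, b * c ∈ Ja → b * σ c ∈ Ja) ∧
      (∀ (b : R) (n : ℕ), 1 ≤ n → b ^ n ∈ Ja → b ∈ Ja) ∧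
      ∀ J : Ideal R,
        (a ∈ J ∧ (∀ x ∈ J, σ x ∈ J) ∧ (∀ b c : R, b * c ∈ J → b * σ c ∈ J) ∧
          (∀ (b : R) (n : ℕ), 1 ≤ n → b ^ n ∈ J → b ∈ J)) → Ja ≤ J) :
    ∃ Ann : Ideal R,
      (∀ b : R, b ∈ Ann ↔ a * b = 0) ∧
      (∀ b ∈ Ann, σ b ∈ Ann) ∧
      (∀ b c : R, b * c ∈ Ann → b * σ c ∈ Ann) ∧
      (∀ (b : R) (n : ℕ), 1 ≤ n → b ^ n ∈ Ann → b ∈ Ann) ∧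
      (∀ b : R, b ∈ Ja → b ∈ Ann → b = 0) := by
  have hpow : ∀ (b : R) (n : ℕ), 1 ≤ n → b ^ n = 0 → b = 0 := by
    intro b n hn
    induction n with
    | zero => omega
    | succ m ih =>
      intro h
      rw [pow_succ] at h
      rcases hdom _ _ h with h1 | h1
      · rcases Nat.eq_zero_or_pos m with hm | hm
        · have h1' : (1:R) = 0 := by simpa [hm] using h1
          calc b = b * 1 := by ring
          _ = 0 := by rw [h1']; ring
        · exact ih hm h1
      · exact h1
  by_cases ha : a = 0
  · -- Ann = ⊤, and Ja = ⊥ since ⊥ satisfies all the conditions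
    refine ⟨⊤, fun b => by simp [ha], fun b _ => trivial, fun b c _ => trivial,
      fun b n _ _ => trivial, fun b hb _ => ?_⟩
    have hJbot : Ja ≤ ⊥ := by
      apply hJa.2.2.2.2
      refine ⟨by simp [ha], fun x hx => ?_, fun b c h => ?_, fun b n hn h => ?_⟩
      · simp only [Ideal.mem_bot] at hx ⊢; simp [hx]
      · simp only [Ideal.mem_bot] at h ⊢; exact hwm _ _ h
      · simp only [Ideal.mem_bot] at h ⊢; exact hpow b n hn h
    simpa using hJbot hb
  · -- Ann = ⊥
    refine ⟨⊥, fun b => ?_, ?_, ?_, ?_, ?_⟩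
    · simp only [Ideal.mem_bot]
      constructor
      · rintro rfl; ring
      · intro h; rcases hdom _ _ h with h1 | h1
        · exact absurd h1 ha
        · exact h1
    · intro b hb; simp only [Ideal.mem_bot] at hb ⊢; simp [hb]
    · intro b c h; simp only [Ideal.mem_bot] at h ⊢; exact hwm _ _ h
    · intro b n hn h; simp only [Ideal.mem_bot] at h ⊢; exact hpow b n hn h
    · intro b _ hb; simpa using hb
end

section
/- Let R be a well-mixed difference ring. Then every maximal proper well-mixed ideal of R is a transformally prime ideal, i.e. it is a prime ideal p with σ⁻¹(p) = p. Consequently, for every well-mixed difference ring R with 1 ≠ 0, the difference spectrum Specᵟ(R) (the set of transformally prime ideals) is nonempty. -/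
/-- In a well-mixed difference ring, every maximal proper well-mixed ideal is
transformally prime; consequently a nontrivial well-mixed difference ring has a
transformally prime ideal. -/
theorem stmt_3 {R : Type*} [CommRing R] [Nontrivial R] (σ : R →+* R)
    (hwm : ∀ a b : R, a * b = 0 → a * σ b = 0) :
    (∀ p : Ideal R,
      ((∀ x ∈ p, σ x ∈ p) ∧ (∀ a b : R, a * b ∈ p → a * σ b ∈ p) ∧ p ≠ ⊤ ∧
        ∀ q : Ideal R, (∀ x ∈ q, σ x ∈ q) → (∀ a b : R, a * b ∈ q → a * σ b ∈ q) →
          q ≠ ⊤ → p ≤ q → p = q) →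
      p.IsPrime ∧ ∀ x : R, σ x ∈ p ↔ x ∈ p) ∧
    ∃ p : Ideal R, p.IsPrime ∧ ∀ x : R, σ x ∈ p ↔ x ∈ p := by
  have main : ∀ p : Ideal R,
      ((∀ x ∈ p, σ x ∈ p) ∧ (∀ a b : R, a * b ∈ p → a * σ b ∈ p) ∧ p ≠ ⊤ ∧
        ∀ q : Ideal R, (∀ x ∈ q, σ x ∈ q) → (∀ a b : R, a * b ∈ q → a * σ b ∈ q) →
          q ≠ ⊤ → p ≤ q → p = q) →
      p.IsPrime ∧ ∀ x : R, σ x ∈ p ↔ x ∈ p := by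
    rintro p ⟨hinv, hpwm, hne, hmax⟩
    -- iterates of σ preserve p
    have hiter : ∀ (n : ℕ) (x : R), x ∈ p → (⇑σ)^[n] x ∈ p := by
      intro n
      induction n with
      | zero => intro x hx; simpa using hx
      | succ n ih =>
        intro x hx
        rw [Function.iterate_succ_apply']
        exact hinv _ (ih x hx)
    constructor
    · -- primality
      constructor
      · exact hne
      · intro a b hab
        by_cases hb : b ∈ p
        · exact Or.inr hb
        · left
          -- the ideal q = {x | ∀ n, x * σ^[n] b ∈ p}
          set q : Ideal R :=
            { carrier := {x | ∀ n : ℕ, x * (⇑σ)^[n] b ∈ p}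
              add_mem' := fun hx hy n => by
                rw [add_mul]; exact p.add_mem (hx n) (hy n)
              zero_mem' := fun n => by rw [zero_mul]; exact p.zero_mem
              smul_mem' := fun c x hx n => by
                rw [smul_eq_mul, mul_assoc]; exact p.mul_mem_left c (hx n) } with hq
          have hqmem : ∀ x : R, x ∈ q ↔ ∀ n : ℕ, x * (⇑σ)^[n] b ∈ p := fun x => Iff.rfl
          have hqinv : ∀ x ∈ q, σ x ∈ q := by
            intro x hx n
            rcases n with _ | n
            · -- σ x * b ∈ p from x * b ∈ p using well-mixedness
              have h0 : x * b ∈ p := by simpa using hx 0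
              have : b * σ x ∈ p := hpwm b x (by rwa [mul_comm])
              simpa [mul_comm] using this
            · have : σ (x * (⇑σ)^[n] b) ∈ p := hinv _ (hx n)
              rw [map_mul] at this
              rwa [Function.iterate_succ_apply']
          have hqwm : ∀ a b' : R, a * b' ∈ q → a * σ b' ∈ q := by
            intro a b' h n
            have h1 : (a * (⇑σ)^[n] b) * b' ∈ p := by
              have h2 := h n
              rwa [show a * (⇑σ)^[n] b * b' = a * b' * (⇑σ)^[n] b by ring]
            have := hpwm _ _ h1
            rwa [show a * (⇑σ)^[n] b * σ b' = a * σ b' * (⇑σ)^[n] b by ring] at this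
          have hqne : q ≠ ⊤ := by
            intro h
            apply hb
            have h1 : (1 : R) ∈ q := h ▸ Submodule.mem_top
            simpa using h1 0
          have hpq : p ≤ q := fun x hx n => p.mul_mem_right _ hx
          have hpeq : p = q := hmax q hqinv hqwm hqne hpq
          have haq : a ∈ q := by
            intro n
            induction n with
            | zero => simpa using hab
            | succ n ih =>
              rw [Function.iterate_succ_apply']
              exact hpwm a _ ih
          rw [hpeq]; exact haq
    · -- transformal reflection
      intro x
      refine ⟨?_, fun hx => hinv x hx⟩
      intro hσx
      -- the ideal q = {y | ∃ n, σ^[n] y ∈ p}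
      set q : Ideal R :=
        { carrier := {y | ∃ n : ℕ, (⇑σ)^[n] y ∈ p}
          add_mem' := by
            rintro a b ⟨n, hn⟩ ⟨m, hm⟩
            refine ⟨n + m, ?_⟩
            rw [iterate_map_add]
            refine p.add_mem ?_ ?_
            · rw [Nat.add_comm, Function.iterate_add_apply]
              exact hiter m _ hn
            · rw [Function.iterate_add_apply]
              exact hiter n _ hm
          zero_mem' := ⟨0, by simp⟩
          smul_mem' := by
            rintro c y ⟨n, hn⟩
            exact ⟨n, by rw [smul_eq_mul, iterate_map_mul]; exact p.mul_mem_left _ hn⟩ } with hq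
      have hqinv : ∀ y ∈ q, σ y ∈ q := by
        rintro y ⟨n, hn⟩
        exact ⟨n, by rw [← Function.iterate_succ_apply, Function.iterate_succ_apply']
                     exact hinv _ hn⟩
      have hqwm : ∀ a b : R, a * b ∈ q → a * σ b ∈ q := by
        rintro a b ⟨n, hn⟩
        refine ⟨n, ?_⟩
        rw [iterate_map_mul] at hn ⊢
        rw [← Function.iterate_succ_apply, Function.iterate_succ_apply']
        exact hpwm _ _ hn
      have hqne : q ≠ ⊤ := by
        intro h
        have h1 : (1 : R) ∈ q := h ▸ Submodule.mem_top
        obtain ⟨n, hn⟩ := h1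
        rw [iterate_map_one] at hn
        exact hne (Ideal.eq_top_of_isUnit_mem p hn isUnit_one)
      have hpq : p ≤ q := fun y hy => ⟨0, by simp only [Function.iterate_zero, id]; exact hy⟩
      have hpeq : p = q := hmax q hqinv hqwm hqne hpq
      rw [hpeq]
      exact ⟨1, by simpa using hσx⟩
  refine ⟨main, ?_⟩
  -- existence via Zorn's lemma
  set S : Set (Ideal R) :=
    {q | (∀ x ∈ q, σ x ∈ q) ∧ (∀ a b : R, a * b ∈ q → a * σ b ∈ q) ∧ q ≠ ⊤} with hS
  have hbot : (⊥ : Ideal R) ∈ S := by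
    refine ⟨?_, ?_, bot_ne_top⟩
    · intro x hx
      rw [Ideal.mem_bot] at hx ⊢
      rw [hx, map_zero]
    · intro a b hab
      rw [Ideal.mem_bot] at hab ⊢
      exact hwm a b hab
  obtain ⟨p, -, hpmax⟩ := zorn_le_nonempty₀ S (fun c hcS hchain y hy => by
    refine ⟨sSup c, ?_, fun z hz => le_sSup hz⟩
    have hcne : c.Nonempty := ⟨y, hy⟩
    have hdir : DirectedOn (· ≤ ·) c := hchain.directedOn
    have hmem : ∀ z : R, z ∈ sSup c ↔ ∃ q ∈ c, z ∈ q := fun z =>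
      Submodule.mem_sSup_of_directed hcne hdir
    refine ⟨?_, ?_, ?_⟩
    · intro x hx
      obtain ⟨q, hqc, hxq⟩ := (hmem x).1 hx
      exact (hmem _).2 ⟨q, hqc, (hcS hqc).1 x hxq⟩
    · intro a b hab
      obtain ⟨q, hqc, habq⟩ := (hmem _).1 hab
      exact (hmem _).2 ⟨q, hqc, (hcS hqc).2.1 a b habq⟩
    · intro h
      have h1 : (1 : R) ∈ sSup c := h ▸ Submodule.mem_top
      obtain ⟨q, hqc, h1q⟩ := (hmem _).1 h1
      exact (hcS hqc).2.2 (Ideal.eq_top_of_isUnit_mem q h1q isUnit_one)) ⊥ hbot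
  obtain ⟨⟨hpinv, hpwm, hpne⟩, hmax⟩ := hpmax
  refine ⟨p, main p ⟨hpinv, hpwm, hpne, ?_⟩⟩
  intro q hqinv hqwm hqne hpq
  exact le_antisymm hpq (hmax ⟨hqinv, hqwm, hqne⟩ hpq)
end

section
/- Let R be a well-mixed difference ring and a ∈ R. Then a belongs to every transformally prime ideal of R if and only if aⁿ = 0 for some n ∈ ℕ[σ], where for n = Σ mᵢσⁱ we set aⁿ = Π σⁱ(a)^{mᵢ}. -/
/-!
If no `σ`-monomial `aⁿ` (`n ≠ 0`) vanishes, the monomials form a `σ`-stable submonoid `S` not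
containing `0`, and by Zorn there is an ideal `p` maximal among the well-mixed ideals disjoint
from `S` (well-mixedness of `R` says that `⊥` is one of them). Such a `p` is transformally prime.
It is prime: if `x, y ∉ p` but `xy ∈ p`, then the well-mixed ideals generated by `p ∪ {x}` and
by `p ∪ {y}` both meet `S`, yet their product lies in `p`, as one sees by comparing them with the
well-mixed ideals `{u | σⁱ v · σʲ u ∈ p for all i, j}`. And `σ⁻¹ p = p`, because `σ⁻¹ p ⊇ p` is
again well-mixed and disjoint from `S`. Conversely a transformally prime ideal containing a
monomial in `a` contains some `σⁱ a`, hence `a`.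
-/

namespace Submonoid

theorem exists_ne_zero_prod_eq_zero_of_zero_mem_closure_range {M ι : Type*}
    [CommMonoidWithZero M] [Nonempty ι] {f : ι → M} (h : 0 ∈ closure (Set.range f)) :
    ∃ m : ι →₀ ℕ, m ≠ 0 ∧ m.prod (f · ^ ·) = 0 := by
  obtain ⟨m, hm⟩ := mem_closure_range_iff.1 h
  obtain rfl | hm0 := eq_or_ne m 0
  · have : Subsingleton M := subsingleton_of_zero_eq_one (by simpa using hm)
    exact ⟨Finsupp.single (Classical.arbitrary ι) 1, by simp, Subsingleton.elim _ _⟩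
  · exact ⟨m, hm0, hm.symm⟩

theorem closure_range_iterate_le_comap {M F : Type*} [Monoid M] [FunLike F M M]
    [MonoidHomClass F M M] (f : F) (a : M) :
    closure (Set.range fun i => f^[i] a) ≤ (closure (Set.range fun i => f^[i] a)).comap f := by
  rw [closure_le]
  rintro _ ⟨i, rfl⟩
  exact subset_closure ⟨i + 1, Function.iterate_succ_apply' f i a⟩

end Submonoid

namespace Ideal

variable {R : Type*} [CommRing R]

def IsWellMixed (σ : R →+* R) (I : Ideal R) : Prop :=
  ∀ x y : R, x * y ∈ I → x * σ y ∈ I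

variable {σ : R →+* R} {I : Ideal R}

theorem isWellMixed_bot_iff :
    (⊥ : Ideal R).IsWellMixed σ ↔ ∀ x y : R, x * y = 0 → x * σ y = 0 := by
  simp only [IsWellMixed, mem_bot]

theorem isWellMixed_sInf {𝒮 : Set (Ideal R)} (h : ∀ I ∈ 𝒮, I.IsWellMixed σ) :
    (sInf 𝒮).IsWellMixed σ := by
  intro x y hxy
  rw [Submodule.mem_sInf] at hxy ⊢
  exact fun I hI => h I hI x y (hxy I hI)

namespace IsWellMixed

theorem map_mem (hI : I.IsWellMixed σ) {x : R} (hx : x ∈ I) : σ x ∈ I := by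
  simpa using hI 1 x (by simpa using hx)

theorem iterate_mem (hI : I.IsWellMixed σ) (n : ℕ) {x : R} (hx : x ∈ I) : σ^[n] x ∈ I := by
  induction n with
  | zero => exact hx
  | succ n ih => exact (Function.iterate_succ_apply' σ n x).symm ▸ hI.map_mem ih

theorem mul_iterate_mem (hI : I.IsWellMixed σ) {x y : R} (h : x * y ∈ I) (n : ℕ) :
    x * σ^[n] y ∈ I := by
  induction n with
  | zero => exact h
  | succ n ih => exact (Function.iterate_succ_apply' σ n y).symm ▸ hI _ _ ih

theorem iterate_mul_iterate_mem (hI : I.IsWellMixed σ) {x y : R} (h : x * y ∈ I) (i j : ℕ) :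
    σ^[i] x * σ^[j] y ∈ I := by
  have hyx : σ^[j] y * x ∈ I := mul_comm x (σ^[j] y) ▸ hI.mul_iterate_mem h j
  exact mul_comm (σ^[j] y) (σ^[i] x) ▸ hI.mul_iterate_mem hyx i

theorem comap (hI : I.IsWellMixed σ) : (I.comap σ).IsWellMixed σ := by
  intro x y hxy
  rw [mem_comap, map_mul] at hxy ⊢
  exact hI _ _ hxy

end IsWellMixed

variable (σ) in
def wellMixedSpan (s : Set R) : Ideal R :=
  sInf {I | s ⊆ I ∧ I.IsWellMixed σ}

theorem subset_wellMixedSpan (s : Set R) : s ⊆ wellMixedSpan σ s :=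
  fun _ hx => Submodule.mem_sInf.2 fun _ hI => hI.1 hx

theorem isWellMixed_wellMixedSpan (s : Set R) : (wellMixedSpan σ s).IsWellMixed σ :=
  isWellMixed_sInf fun _ hI => hI.2

theorem wellMixedSpan_le {s : Set R} (hI : I.IsWellMixed σ) (hs : s ⊆ I) :
    wellMixedSpan σ s ≤ I :=
  sInf_le ⟨hs, hI⟩

variable (σ) in
def orbitColon (I : Ideal R) (v : R) : Ideal R where
  carrier := {u | ∀ i j : ℕ, σ^[i] v * σ^[j] u ∈ I}
  add_mem' hx hy i j := by
    simpa only [iterate_map_add, mul_add] using I.add_mem (hx i j) (hy i j)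
  zero_mem' i j := by simp
  smul_mem' r u hu i j := by
    simpa only [smul_eq_mul, iterate_map_mul, mul_left_comm] using I.mul_mem_left (σ^[j] r) (hu i j)

theorem mem_orbitColon {v u : R} : u ∈ orbitColon σ I v ↔ ∀ i j : ℕ, σ^[i] v * σ^[j] u ∈ I :=
  Iff.rfl

theorem mem_orbitColon_comm {v u : R} : u ∈ orbitColon σ I v ↔ v ∈ orbitColon σ I u := by
  simp only [mem_orbitColon, mul_comm (σ^[_] v)]
  exact forall_comm

namespace IsWellMixed

theorem le_orbitColon (hI : I.IsWellMixed σ) (v : R) : I ≤ orbitColon σ I v :=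
  fun _ hu _ j => I.mul_mem_left _ (hI.iterate_mem j hu)

theorem isWellMixed_orbitColon (hI : I.IsWellMixed σ) (v : R) :
    (orbitColon σ I v).IsWellMixed σ := by
  intro x y hxy i j
  have h := hI (σ^[i] v * σ^[j] x) (σ^[j] y) <| by
    simpa only [iterate_map_mul, mul_assoc] using hxy i j
  rwa [iterate_map_mul, ← Function.iterate_succ_apply, Function.iterate_succ_apply', ← mul_assoc]

theorem mul_mem_of_mem_wellMixedSpan (hI : I.IsWellMixed σ) {x y u v : R} (hxy : x * y ∈ I)
    (hu : u ∈ wellMixedSpan σ (insert x I)) (hv : v ∈ wellMixedSpan σ (insert y I)) :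
    u * v ∈ I := by
  have hvx : v ∈ orbitColon σ I x :=
    wellMixedSpan_le (hI.isWellMixed_orbitColon x)
      (Set.insert_subset (fun i j => hI.iterate_mul_iterate_mem hxy i j) (hI.le_orbitColon x)) hv
  have huv : u ∈ orbitColon σ I v :=
    wellMixedSpan_le (hI.isWellMixed_orbitColon v)
      (Set.insert_subset (mem_orbitColon_comm.1 hvx) (hI.le_orbitColon v)) hu
  simpa [mul_comm] using huv 0 0

end IsWellMixed

section Maximal

variable {S : Submonoid R} {p : Ideal R}

theorem exists_le_maximal_isWellMixed_disjoint (hI : I.IsWellMixed σ)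
    (hIS : Disjoint (I : Set R) S) :
    ∃ p, I ≤ p ∧ Maximal (fun J : Ideal R => J.IsWellMixed σ ∧ Disjoint (J : Set R) S) p := by
  refine zorn_le_nonempty₀ _ (fun c hc hchain J hJ => ?_) I ⟨hI, hIS⟩
  have hmem {x : R} (hx : x ∈ sSup c) : ∃ K ∈ c, x ∈ K :=
    (Submodule.mem_sSup_of_directed ⟨J, hJ⟩ hchain.directedOn).1 hx
  refine ⟨sSup c, ⟨fun x y hxy => ?_, Set.disjoint_left.2 fun s hs => ?_⟩, fun K hK => le_sSup hK⟩
  · obtain ⟨K, hKc, hK⟩ := hmem hxy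
    exact le_sSup hKc ((hc hKc).1 x y hK)
  · obtain ⟨K, hKc, hK⟩ := hmem hs
    exact Set.disjoint_left.1 (hc hKc).2 hK

theorem exists_mem_wellMixedSpan_insert_of_notMem
    (hp : Maximal (fun J : Ideal R => J.IsWellMixed σ ∧ Disjoint (J : Set R) S) p) {x : R}
    (hx : x ∉ p) : ∃ s ∈ S, s ∈ wellMixedSpan σ (insert x p) := by
  by_contra! h
  have hle : p ≤ wellMixedSpan σ (insert x p) :=
    fun _ hy => subset_wellMixedSpan _ (Set.mem_insert_of_mem _ hy)
  have heq := hp.eq_of_ge ⟨isWellMixed_wellMixedSpan _, Set.disjoint_right.2 h⟩ hle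
  exact hx (heq ▸ subset_wellMixedSpan _ (Set.mem_insert x _))

theorem isPrime_of_maximal_isWellMixed_disjoint
    (hp : Maximal (fun J : Ideal R => J.IsWellMixed σ ∧ Disjoint (J : Set R) S) p) :
    p.IsPrime where
  ne_top' h := Set.disjoint_left.1 hp.prop.2 (h ▸ Submodule.mem_top) S.one_mem
  mem_or_mem' {x y} hxy := by
    by_contra! hxy'
    obtain ⟨s, hsS, hs⟩ := exists_mem_wellMixedSpan_insert_of_notMem hp hxy'.1
    obtain ⟨t, htS, ht⟩ := exists_mem_wellMixedSpan_insert_of_notMem hp hxy'.2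
    exact Set.disjoint_left.1 hp.prop.2
      (hp.prop.1.mul_mem_of_mem_wellMixedSpan hxy hs ht) (S.mul_mem hsS htS)

theorem comap_eq_of_maximal_isWellMixed_disjoint (hS : S ≤ S.comap σ)
    (hp : Maximal (fun J : Ideal R => J.IsWellMixed σ ∧ Disjoint (J : Set R) S) p) :
    p.comap σ = p := by
  refine hp.eq_of_ge ⟨hp.prop.1.comap, Set.disjoint_left.2 fun s hs hsS => ?_⟩
    fun _ => hp.prop.1.map_mem
  exact Set.disjoint_left.1 hp.prop.2 hs (hS hsS)

end Maximal

theorem iterate_mem_iff {p : Ideal R} (hp : ∀ x : R, σ x ∈ p ↔ x ∈ p) (n : ℕ) {x : R} :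
    σ^[n] x ∈ p ↔ x ∈ p := by
  induction n with
  | zero => rfl
  | succ n ih => rw [Function.iterate_succ_apply', hp, ih]

end Ideal

/-- In a well-mixed difference ring, `a` lies in every transformally prime ideal
iff `aⁿ = 0` for some nonzero `n = Σ mᵢσⁱ ∈ ℕ[σ]`, where `aⁿ = Π σⁱ(a)^{mᵢ}`. -/
theorem stmt_4 {R : Type*} [CommRing R] (σ : R →+* R)
    (hwm : ∀ a b : R, a * b = 0 → a * σ b = 0) (a : R) :
    (∀ p : Ideal R, p.IsPrime → (∀ x : R, σ x ∈ p ↔ x ∈ p) → a ∈ p) ↔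
    ∃ m : ℕ →₀ ℕ, m ≠ 0 ∧ (m.prod fun i e => ((⇑σ)^[i] a) ^ e) = 0 := by
  set S := Submonoid.closure (Set.range fun i => (⇑σ)^[i] a)
  refine ⟨fun H => Submonoid.exists_ne_zero_prod_eq_zero_of_zero_mem_closure_range
    (by_contra fun h0 => ?_), ?_⟩
  · obtain ⟨p, -, hp⟩ := Ideal.exists_le_maximal_isWellMixed_disjoint (S := S)
      (Ideal.isWellMixed_bot_iff.2 hwm) (by simpa [Submodule.bot_coe] using h0)
    have hpσ := Ideal.comap_eq_of_maximal_isWellMixed_disjoint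
      (Submonoid.closure_range_iterate_le_comap σ a) hp
    have hap := H p (Ideal.isPrime_of_maximal_isWellMixed_disjoint hp)
      fun x => SetLike.ext_iff.1 hpσ x
    exact Set.disjoint_left.1 hp.prop.2 hap (Submonoid.subset_closure ⟨0, rfl⟩)
  · rintro ⟨m, -, hm⟩ p hp hpσ
    by_contra ha
    have hS : S ≤ p.primeCompl := Submonoid.closure_le.2 <|
      Set.range_subset_iff.2 fun i => (Ideal.iterate_mem_iff hpσ i).not.2 ha
    exact hS (Submonoid.mem_closure_range_iff.2 ⟨m, rfl⟩) (hm ▸ p.zero_mem)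
end

section
/- Let K ⊆ L be fields with an endomorphism σ of L restricting to K, and suppose L has finite transcendence degree over K, P is transformally prime on the big ring R, P' = P ∩ R' for a difference subring R' ≤ R, and the fraction field K of R/P is algebraic over the fraction field K' of R'/P'. Then P is transformally prime if and only if P' is transformally prime. -/
/-- Let `P` be an algebraically prime difference ideal of a difference ring `R`,
`R'` a difference subring, `P' = P ∩ R'`, and suppose the fraction field of
`R/P` is algebraic over that of `R'/P'`. Then `P` is transformally prime iff
`P'` is transformally prime. -/
theorem stmt_6 {R : Type*} [CommRing R] (σ : R →+* R) (P : Ideal R) [P.IsPrime]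
    (hσP : ∀ x ∈ P, σ x ∈ P)
    (R' : Subring R) (hR' : ∀ x ∈ R', σ x ∈ R')
    (halg : ∀ z : FractionRing (R ⧸ P), ∃ p : Polynomial R',
      Polynomial.eval₂
        ((algebraMap (R ⧸ P) (FractionRing (R ⧸ P))).comp
          ((Ideal.Quotient.mk P).comp R'.subtype)) z p = 0 ∧
      p.map ((algebraMap (R ⧸ P) (FractionRing (R ⧸ P))).comp
          ((Ideal.Quotient.mk P).comp R'.subtype)) ≠ 0) :
    (∀ x : R, σ x ∈ P ↔ x ∈ P) ↔ (∀ x : R', σ (x : R) ∈ P ↔ (x : R) ∈ P) := by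
  constructor
  · exact fun h x => h x
  · intro h x
    refine ⟨fun hσx => ?_, fun hx => hσP x hx⟩
    by_contra hx
    letI : IsDomain (R ⧸ P) := Ideal.Quotient.isDomain P
    set K := FractionRing (R ⧸ P) with hK
    have hfinj : Function.Injective (algebraMap (R ⧸ P) K) :=
      IsFractionRing.injective (R ⧸ P) K
    set ψ : R' →+* (R ⧸ P) := (Ideal.Quotient.mk P).comp R'.subtype with hψ
    set φ : R' →+* K := (algebraMap (R ⧸ P) K).comp ψ with hφ
    set z : K := algebraMap (R ⧸ P) K (Ideal.Quotient.mk P x) with hz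
    have hz0 : z ≠ 0 := by
      rw [hz, ne_eq, map_eq_zero_iff _ hfinj, Ideal.Quotient.eq_zero_iff_mem]
      exact hx
    obtain ⟨p, hpz, hpne⟩ := halg z
    set q : Polynomial K := p.map φ with hq
    have hqz : q.eval z = 0 := by rw [hq, Polynomial.eval_map]; exact hpz
    have hq0 : q ≠ 0 := hpne
    set k := q.natTrailingDegree with hk
    obtain ⟨q₂, hq₂⟩ : Polynomial.X ^ k ∣ q :=
      Polynomial.X_pow_dvd_iff.mpr fun d hd =>
        Polynomial.coeff_eq_zero_of_lt_natTrailingDegree hd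
    have hcoe : ∀ n, q₂.coeff n = φ (p.coeff (k + n)) := by
      intro n
      have := Polynomial.coeff_X_pow_mul q₂ k n
      rw [← hq₂] at this
      rw [← this, hq, Polynomial.coeff_map, add_comm]
    have hq₂0 : q₂.coeff 0 ≠ 0 := by
      have : q.coeff k ≠ 0 := by
        rw [← Polynomial.trailingCoeff]
        exact Polynomial.trailingCoeff_nonzero_iff_nonzero.mpr hq0
      have h2 := Polynomial.coeff_X_pow_mul q₂ k 0
      rw [← hq₂, zero_add] at h2
      rw [h2] at this
      exact this
    have hq₂z : q₂.eval z = 0 := by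
      have : z ^ k * q₂.eval z = 0 := by
        have h' := hqz; rw [hq₂] at h'; simpa using h'
      rcases mul_eq_zero.mp this with h' | h'
      · exact absurd h' (pow_ne_zero _ hz0)
      · exact h'
    -- shifted polynomial over R'
    set p₂ : Polynomial R' :=
      ∑ i ∈ Finset.range (p.natDegree + 1), Polynomial.monomial i (p.coeff (k + i)) with hp₂
    have hp₂c : ∀ n, p₂.coeff n =
        if n ∈ Finset.range (p.natDegree + 1) then p.coeff (k + n) else 0 := by
      intro n
      rw [hp₂, Polynomial.finset_sum_coeff]
      simp [Polynomial.coeff_monomial]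
    have hmap : p₂.map φ = q₂ := by
      ext n
      rw [Polynomial.coeff_map, hp₂c n, hcoe n]
      split
      · rfl
      · rename_i hn
        rw [map_zero]
        have : p.natDegree < k + n := by
          simp only [Finset.mem_range, not_lt] at hn
          omega
        rw [Polynomial.coeff_eq_zero_of_natDegree_lt this, map_zero]
    have hwP : Polynomial.eval₂ R'.subtype x p₂ ∈ P := by
      have h1 : (algebraMap (R ⧸ P) K) (Polynomial.eval₂ ψ (Ideal.Quotient.mk P x) p₂) = 0 := by
        rw [Polynomial.hom_eval₂]
        rw [← hφ, ← hz, ← Polynomial.eval_map, hmap]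
        exact hq₂z
      have h2 : Polynomial.eval₂ ψ (Ideal.Quotient.mk P x) p₂ = 0 := by
        apply hfinj; rw [h1, map_zero]
      have h3 : Ideal.Quotient.mk P (Polynomial.eval₂ R'.subtype x p₂) = 0 := by
        rw [Polynomial.hom_eval₂]; exact h2
      exact Ideal.Quotient.eq_zero_iff_mem.mp h3
    have hσw : σ (Polynomial.eval₂ R'.subtype x p₂) ∈ P := hσP _ hwP
    rw [Polynomial.hom_eval₂, Polynomial.eval₂_eq_sum_range, Finset.sum_range_succ'] at hσw
    have hS : ∑ i ∈ Finset.range p₂.natDegree,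
        (σ.comp R'.subtype) (p₂.coeff (i + 1)) * σ x ^ (i + 1) ∈ P := by
      refine Ideal.sum_mem P fun i _ => ?_
      rw [pow_succ, ← mul_assoc]
      exact P.mul_mem_left _ hσx
    have hb₀ : σ (p₂.coeff 0 : R) ∈ P := by
      have := P.sub_mem hσw hS
      simpa using this
    have : (p₂.coeff 0 : R) ∈ P := (h (p₂.coeff 0)).mp hb₀
    apply hq₂0
    rw [← hmap, Polynomial.coeff_map, hφ]
    simp only [RingHom.comp_apply, hψ]
    have h0 : Ideal.Quotient.mk P (R'.subtype (p₂.coeff 0)) = 0 :=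
      Ideal.Quotient.eq_zero_iff_mem.mpr this
    rw [h0, map_zero]
end

section
/- Let M be a finitely generated ℤ[σ]-submodule of ℚ[σ] (the polynomial ring in one variable over ℚ). Let M̃ be the union of all ℤ[σ]-submodules N of ℚ[σ] such that N/M is finite. Then M̃ is generated by a single element as a ℤ[σ]-module. -/
/-!
Let `d` generate the ideal of `ℚ[X]` spanned by `M`. Clearing denominators gives `γ = d / m`
with `M ⊆ ℤ[X] γ` and `n γ ∈ M` for some integer `n ≠ 0`. As long as `M ⊆ ℤ[X] p γ` for a prime
`p` we may replace `γ` by `p γ`; then `p ∣ n`, so this stops, and afterwards the ideal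
`I = {c | c γ ∈ M}` contains `n` but lies in no `p ℤ[X]`. Such an ideal has finite index, because
`ℤ[X] / (p, z) ≅ 𝔽_p[X] / (z̄)` is finite for `z ∉ p ℤ[X]`; hence `ℤ[X] γ ⊆ M̃`.

Conversely, if `x ∈ N` with `N / M` finite, then `x = q γ` for some `q ∈ ℚ[X]` since a multiple
of `x` lies in `M`, and by pigeonhole `X ^ (b D) x ≡ X ^ (a D) x mod M` for some `a < b`, where
`D > deg q`. Thus `q (X ^ (b D) - X ^ (a D)) ∈ ℤ[X]`, and the gap between the two shifted copies
of `q` forces `q ∈ ℤ[X]`.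
-/

open Polynomial

attribute [local instance] Polynomial.algebra

theorem Polynomial.intPolynomial_smul_def {A : Type*} [CommRing A] (c : ℤ[X]) (x : A[X]) :
    c • x = c.map (Int.castRingHom A) * x := by
  rw [Algebra.smul_def, Polynomial.algebraMap_def, algebraMap_int_eq, coe_mapRingHom]

def AddSubgroup.toIntPolynomialSubmodule {A : Type*} [CommRing A] (M : AddSubgroup A[X])
    (hM : ∀ x ∈ M, X * x ∈ M) : Submodule ℤ[X] A[X] where
  toAddSubmonoid := M.toAddSubmonoid
  smul_mem' c x hx := by
    induction c using Polynomial.induction_on with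
    | C a =>
      rw [intPolynomial_smul_def, Polynomial.map_C, eq_intCast, C_eq_intCast,
        ← zsmul_eq_mul]
      exact M.zsmul_mem hx a
    | add p q hp hq => rw [add_smul]; exact M.add_mem hp hq
    | monomial n a ih =>
      rw [pow_succ, ← mul_assoc, mul_comm, mul_smul, intPolynomial_smul_def X, Polynomial.map_X]
      exact hM _ ih

theorem AddSubgroup.toAddSubgroup_toIntPolynomialSubmodule {A : Type*} [CommRing A]
    (M : AddSubgroup A[X]) (hM : ∀ x ∈ M, X * x ∈ M) :
    (M.toIntPolynomialSubmodule hM).toAddSubgroup = M :=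
  rfl

theorem Polynomial.mem_map_range_of_mul_X_pow_sub {R S : Type*} [Ring R] [Ring S] (f : R →+* S)
    {q : S[X]} {k l : ℕ} (hkl : q.natDegree + k < l)
    (h : q * X ^ l - q * X ^ k ∈ (mapRingHom f).range) : q ∈ (mapRingHom f).range := by
  rw [mem_map_range] at h ⊢
  intro i
  have hgap : q.coeff (i + l - k) = 0 := coeff_eq_zero_of_natDegree_lt (by omega)
  simpa [coeff_mul_X_pow', hgap, show k ≤ i + l by omega] using h (i + l)

namespace Submodule

variable {R M : Type*} [CommRing R] [AddCommGroup M] [Module R M]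

theorem exists_pow_smul_sub_pow_smul_mem {P N : Submodule R M}
    (hPN : P.toAddSubgroup.relIndex N.toAddSubgroup ≠ 0) (r : R) {x : M} (hx : x ∈ N) :
    ∃ k l : ℕ, k < l ∧ r ^ l • x - r ^ k • x ∈ P := by
  have : Finite (N.toAddSubgroup ⧸ P.toAddSubgroup.addSubgroupOf N.toAddSubgroup) :=
    Nat.finite_of_card_ne_zero hPN
  obtain ⟨k, l, hkl, h⟩ := Set.finite_univ.exists_lt_map_eq_of_forall_mem
    (f := fun k : ℕ => (QuotientAddGroup.mk (⟨r ^ k • x, N.smul_mem _ hx⟩ : N.toAddSubgroup) :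
      N.toAddSubgroup ⧸ P.toAddSubgroup.addSubgroupOf N.toAddSubgroup)) fun _ => Set.mem_univ _
  rw [QuotientAddGroup.eq, AddSubgroup.mem_addSubgroupOf] at h
  exact ⟨k, l, hkl, by simpa [neg_add_eq_sub] using h⟩

theorem index_colon_singleton (P : Submodule R M) (γ : M) :
    (P.colon {γ}).toAddSubgroup.index = P.toAddSubgroup.relIndex (R ∙ γ).toAddSubgroup := by
  have hrange : (R ∙ γ).toAddSubgroup = (LinearMap.toSpanSingleton R M γ).toAddMonoidHom.range := by
    ext x; simp [mem_span_singleton]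
  have hcomap : (P.colon {γ}).toAddSubgroup =
      P.toAddSubgroup.comap (LinearMap.toSpanSingleton R M γ).toAddMonoidHom := by
    ext x; simp [mem_colon_singleton]
  rw [hrange, hcomap, AddSubgroup.index_comap]

end Submodule

/-- Multiplication by `a` embeds `R ⧸ I.colon {a}` into `R ⧸ I` with cokernel
`R ⧸ (I ⊔ span {a})`. -/
theorem Ideal.finite_quotient_of_sup_span_singleton_of_colon {R : Type*} [CommRing R]
    (I : Ideal R) (a : R)
    [Finite (R ⧸ I ⊔ span {a})] [Finite (R ⧸ I.colon {a})] : Finite (R ⧸ I) := by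
  have hspan : (span {a}).toAddSubgroup = (AddMonoidHom.mulLeft a).range := by
    ext x; simp [mem_span_singleton', mul_comm]
  have hcolon : (I.colon {a}).toAddSubgroup = I.toAddSubgroup.comap (AddMonoidHom.mulLeft a) := by
    ext x; simp [Submodule.mem_colon_singleton, mul_comm]
  have hrel : I.toAddSubgroup.relIndex (I ⊔ span {a}).toAddSubgroup ≠ 0 := by
    rw [Submodule.sup_toAddSubgroup, AddSubgroup.relIndex_sup_left, hspan,
      ← AddSubgroup.index_comap, ← hcolon]
    have : Finite (R ⧸ (I.colon {a}).toAddSubgroup) := ‹Finite (R ⧸ I.colon {a})›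
    exact AddSubgroup.index_ne_zero_of_finite
  have : Finite (R ⧸ (I ⊔ span {a}).toAddSubgroup) := ‹Finite (R ⧸ I ⊔ span {a})›
  have : I.toAddSubgroup.FiniteIndex := ⟨by
    rw [← AddSubgroup.relIndex_mul_index (Submodule.toAddSubgroup_mono le_sup_left)]
    exact mul_ne_zero hrel AddSubgroup.index_ne_zero_of_finite⟩
  exact AddSubgroup.finite_quotient_of_finiteIndex

theorem Polynomial.finite_quotient_span_natCast_pair {p : ℕ} [Fact p.Prime] {z : ℤ[X]}
    (hz : z ∉ Ideal.span {(p : ℤ[X])}) : Finite (ℤ[X] ⧸ Ideal.span {(p : ℤ[X]), z}) := by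
  set f := mapRingHom (Int.castRingHom (ZMod p))
  have hf : Function.Surjective f := map_surjective _ ZMod.intCast_surjective
  have hker : RingHom.ker f = Ideal.span {(p : ℤ[X])} := by
    rw [ker_mapRingHom, ZMod.ker_intCastRingHom, Ideal.map_span, Set.image_singleton, map_natCast]
  have hfz : f z ≠ 0 := fun h => hz (hker ▸ h)
  have hcomap : (Ideal.span {f z}).comap f = Ideal.span {(p : ℤ[X]), z} := by
    rw [← Set.image_singleton, ← Ideal.map_span, Ideal.comap_map_of_surjective _ hf,
      ← RingHom.ker_eq_comap_bot, hker, Ideal.span_insert, sup_comm]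
  have : Module.Finite (ZMod p) (AdjoinRoot (f z)) := (AdjoinRoot.powerBasis hfz).finite
  have : Finite ((ZMod p)[X] ⧸ Ideal.span {f z}) :=
    Module.finite_of_finite (ZMod p) (M := AdjoinRoot (f z))
  rw [← hcomap]
  exact Finite.of_injective _ Ideal.quotientMap_injective

theorem Polynomial.finite_quotient_of_natCast_mem {n : ℕ} (hn : n ≠ 0) {I : Ideal ℤ[X]}
    (hnI : (n : ℤ[X]) ∈ I) (hI : ∀ p : ℕ, p.Prime → ¬ I ≤ Ideal.span {(p : ℤ[X])}) :
    Finite (ℤ[X] ⧸ I) := by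
  induction n using Nat.recOnMul generalizing I with
  | zero => exact absurd rfl hn
  | one =>
    rw [Nat.cast_one, ← Ideal.eq_top_iff_one] at hnI
    subst hnI
    exact Finite.of_subsingleton
  | prime p hp =>
    have : Fact p.Prime := ⟨hp⟩
    obtain ⟨z, hzI, hz⟩ := SetLike.not_le_iff_exists.mp (hI p hp)
    have hle : Ideal.span {(p : ℤ[X]), z} ≤ I := by
      simpa [Ideal.span_le, Set.insert_subset_iff] using ⟨hnI, hzI⟩
    have := finite_quotient_span_natCast_pair hz
    exact Finite.of_surjective _ (Ideal.Quotient.factor_surjective hle)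
  | mul a b iha ihb =>
    obtain ⟨ha, hb⟩ := mul_ne_zero_iff.mp hn
    have : Finite (ℤ[X] ⧸ I ⊔ Ideal.span {(a : ℤ[X])}) :=
      iha ha (Ideal.mem_sup_right (Ideal.mem_span_singleton_self _))
        fun p hp h => hI p hp (le_sup_left.trans h)
    have : Finite (ℤ[X] ⧸ I.colon {(a : ℤ[X])}) :=
      ihb hb (Submodule.mem_colon_singleton.mpr (by rwa [smul_eq_mul, mul_comm, ← Nat.cast_mul]))
        fun p hp h => hI p hp (Ideal.le_colon.trans h)
    exact Ideal.finite_quotient_of_sup_span_singleton_of_colon I (a : ℤ[X])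

section IntPolynomialModule

variable {V : Type*} [AddCommGroup V] [Module ℤ[X] V]

theorem Polynomial.relIndex_span_singleton_ne_zero {P : Submodule ℤ[X] V} {γ : V} {n : ℕ}
    (hn : n ≠ 0) (hPγ : P ≤ ℤ[X] ∙ γ) (hnγ : (n : ℤ[X]) • γ ∈ P)
    (hprim : ∀ p : ℕ, p.Prime → ¬ P ≤ ℤ[X] ∙ ((p : ℤ[X]) • γ)) :
    P.toAddSubgroup.relIndex (ℤ[X] ∙ γ).toAddSubgroup ≠ 0 := by
  have : Finite (ℤ[X] ⧸ P.colon {γ}) := by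
    refine finite_quotient_of_natCast_mem hn (Submodule.mem_colon_singleton.mpr hnγ)
      fun p hp hle => hprim p hp fun x hx => ?_
    obtain ⟨c, rfl⟩ := Submodule.mem_span_singleton.mp (hPγ hx)
    obtain ⟨c', rfl⟩ := Ideal.mem_span_singleton'.mp (hle (Submodule.mem_colon_singleton.mpr hx))
    exact Submodule.mem_span_singleton.mpr ⟨c', (mul_smul _ _ _).symm⟩
  have : Finite (ℤ[X] ⧸ (P.colon {γ}).toAddSubgroup) := this
  rw [← Submodule.index_colon_singleton]
  exact AddSubgroup.index_ne_zero_of_finite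

theorem Polynomial.exists_relIndex_span_singleton_ne_zero [Module.IsTorsionFree ℤ[X] V]
    {P : Submodule ℤ[X] V} {γ : V} (hγ : γ ≠ 0) {n : ℕ} (hn : n ≠ 0) (hPγ : P ≤ ℤ[X] ∙ γ)
    (hnγ : (n : ℤ[X]) • γ ∈ P) :
    ∃ γ' : V, P ≤ ℤ[X] ∙ γ' ∧ P.toAddSubgroup.relIndex (ℤ[X] ∙ γ').toAddSubgroup ≠ 0 := by
  induction n using Nat.strong_induction_on generalizing γ with
  | _ n ih =>
  by_cases hprim : ∀ p : ℕ, p.Prime → ¬ P ≤ ℤ[X] ∙ ((p : ℤ[X]) • γ)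
  · exact ⟨γ, hPγ, relIndex_span_singleton_ne_zero hn hPγ hnγ hprim⟩
  push Not at hprim
  -- otherwise pass from `γ` and `n` to `p • γ` and `n / p`
  obtain ⟨p, hp, hPp⟩ := hprim
  obtain ⟨c, hc⟩ := Submodule.mem_span_singleton.mp (hPp hnγ)
  have hpn : p ∣ n := by
    have hcp : c * (p : ℤ[X]) = n := smul_left_injective ℤ[X] hγ (by simpa [mul_smul] using hc)
    have h0 : c.coeff 0 * p = n := by
      simpa only [mul_coeff_zero, coeff_natCast_ite, ↓reduceIte] using congrArg (coeff · 0) hcp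
    exact Int.natCast_dvd_natCast.mp ⟨c.coeff 0, by rw [← h0, mul_comm]⟩
  obtain ⟨k, rfl⟩ := hpn
  have hk : k ≠ 0 := right_ne_zero_of_mul hn
  have hpγ : (p : ℤ[X]) • γ ≠ 0 := by
    simpa using (smul_left_injective ℤ[X] hγ).ne (Nat.cast_ne_zero.mpr hp.ne_zero)
  exact ih k (lt_mul_left (Nat.pos_of_ne_zero hk) hp.one_lt) hpγ hk hPp
    (by rwa [smul_smul, ← Nat.cast_mul, mul_comm])

end IntPolynomialModule

theorem Polynomial.exists_natCast_mul_mem_range {ι : Type*} (s : Finset ι) (q : ι → ℚ[X]) :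
    ∃ n : ℕ, n ≠ 0 ∧ ∀ i ∈ s, (n : ℚ[X]) * q i ∈ (algebraMap ℤ[X] ℚ[X]).range := by
  have := Polynomial.isLocalization (nonZeroDivisors ℤ) ℚ
  obtain ⟨⟨_, b, hb, rfl⟩, h⟩ :=
    IsLocalization.exist_integer_multiples (Submonoid.map C (nonZeroDivisors ℤ)) s q
  refine ⟨b.natAbs, Int.natAbs_ne_zero.mpr (nonZeroDivisors.ne_zero hb), fun i hi => ?_⟩
  obtain ⟨c, hc⟩ := h i hi
  have hbq : (b : ℚ[X]) * q i ∈ (algebraMap ℤ[X] ℚ[X]).range :=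
    ⟨c, by rw [hc, Algebra.smul_def, algebraMap_def]; simp⟩
  rcases Int.natAbs_eq b with hb | hb
  · rwa [hb, Int.cast_natCast] at hbq
  · rw [hb, Int.cast_neg, Int.cast_natCast, neg_mul] at hbq
    simpa using neg_mem hbq

theorem Polynomial.exists_le_span_singleton_natCast_smul_mem (F : Finset ℚ[X]) :
    ∃ γ : ℚ[X], ∃ n : ℕ, n ≠ 0 ∧ Submodule.span ℤ[X] (F : Set ℚ[X]) ≤ ℤ[X] ∙ γ ∧
      (n : ℤ[X]) • γ ∈ Submodule.span ℤ[X] (F : Set ℚ[X]) := by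
  obtain ⟨d, hd⟩ := (IsPrincipalIdealRing.principal (Ideal.span (F : Set ℚ[X]))).principal
  replace hd : Ideal.span (F : Set ℚ[X]) = Ideal.span {d} := hd
  have hdvd : ∀ f ∈ F, d ∣ f := fun f hf =>
    Ideal.mem_span_singleton.mp (hd ▸ Ideal.subset_span hf)
  choose! q hq using hdvd
  obtain ⟨a, -, ha⟩ := Submodule.mem_span_finset.mp (hd ▸ Ideal.mem_span_singleton_self d)
  obtain ⟨m, hm, hmq⟩ := exists_natCast_mul_mem_range F q
  obtain ⟨m', hm', hma⟩ := exists_natCast_mul_mem_range F a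
  choose! c hc using hmq
  choose! c' hc' using hma
  have hm_inv : (m : ℚ[X]) * C (m⁻¹ : ℚ) = 1 := by
    rw [← C_eq_natCast, ← C_mul, mul_inv_cancel₀ (Nat.cast_ne_zero.mpr hm), C_1]
  refine ⟨C (m⁻¹ : ℚ) * d, m * m', mul_ne_zero hm hm', Submodule.span_le.mpr fun f hf => ?_, ?_⟩
  · refine Submodule.mem_span_singleton.mpr ⟨c f, ?_⟩
    rw [Algebra.smul_def, hc f hf]
    conv_rhs => rw [hq f hf]
    linear_combination (q f * d) * hm_inv
  · have : ((m * m' : ℕ) : ℤ[X]) • (C (m⁻¹ : ℚ) * d) = ∑ f ∈ F, c' f • f := by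
      calc ((m * m' : ℕ) : ℤ[X]) • (C (m⁻¹ : ℚ) * d) = (m' : ℚ[X]) * ∑ f ∈ F, a f • f := by
            rw [ha, Algebra.smul_def, map_natCast, Nat.cast_mul]
            linear_combination (m' * d) * hm_inv
        _ = ∑ f ∈ F, c' f • f := by
            rw [Finset.mul_sum]
            refine Finset.sum_congr rfl fun f hf => ?_
            rw [smul_eq_mul, Algebra.smul_def, hc' f hf, mul_assoc]
    rw [this]
    exact Submodule.sum_mem _ fun f hf => Submodule.smul_mem _ _ (Submodule.subset_span hf)

theorem Polynomial.exists_le_span_singleton_relIndex_ne_zero {P : Submodule ℤ[X] ℚ[X]}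
    (hP : P.FG) :
    ∃ γ : ℚ[X], P ≤ ℤ[X] ∙ γ ∧ P.toAddSubgroup.relIndex (ℤ[X] ∙ γ).toAddSubgroup ≠ 0 := by
  obtain ⟨F, rfl⟩ := hP
  obtain ⟨γ, n, hn, hle, hnγ⟩ := exists_le_span_singleton_natCast_smul_mem F
  rcases eq_or_ne γ 0 with rfl | hγ
  · rw [Submodule.span_zero_singleton, le_bot_iff] at hle
    exact ⟨0, by simp [hle]⟩
  · exact exists_relIndex_span_singleton_ne_zero hγ hn hle hnγ

theorem Polynomial.le_span_singleton_of_relIndex_ne_zero {P N : Submodule ℤ[X] ℚ[X]} {γ : ℚ[X]}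
    (hPN : P.toAddSubgroup.relIndex N.toAddSubgroup ≠ 0) (hPγ : P ≤ ℤ[X] ∙ γ) :
    N ≤ ℤ[X] ∙ γ := by
  intro x hx
  set n := P.toAddSubgroup.relIndex N.toAddSubgroup
  have hnx : n • x ∈ P := by
    have := AddSubgroup.nsmul_index_mem (P.toAddSubgroup.addSubgroupOf N.toAddSubgroup) ⟨x, hx⟩
    rwa [AddSubgroup.mem_addSubgroupOf, AddSubgroup.coe_nsmul] at this
  obtain ⟨c₀, hc₀⟩ := Submodule.mem_span_singleton.mp (hPγ hnx)
  set q := C (n⁻¹ : ℚ) * c₀.map (Int.castRingHom ℚ)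
  have hxq : x = q * γ := by
    have hn : (n : ℚ) ≠ 0 := Nat.cast_ne_zero.mpr hPN
    rw [intPolynomial_smul_def, nsmul_eq_mul] at hc₀
    calc x = C (n⁻¹ : ℚ) * ((n : ℚ[X]) * x) := by
          rw [← mul_assoc, ← C_eq_natCast, ← C_mul, inv_mul_cancel₀ hn, C_1, one_mul]
      _ = q * γ := by rw [← hc₀, mul_assoc]
  set D := q.natDegree + 1 with hD
  obtain ⟨k, l, hkl, hmem⟩ := Submodule.exists_pow_smul_sub_pow_smul_mem hPN (X ^ D) hx
  obtain ⟨c, hc⟩ := Submodule.mem_span_singleton.mp (hPγ hmem)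
  rcases eq_or_ne γ 0 with rfl | hγ
  · simp [hxq]
  have hrange : q * X ^ (D * l) - q * X ^ (D * k) ∈ (mapRingHom (Int.castRingHom ℚ)).range := by
    refine ⟨c, mul_right_cancel₀ hγ ?_⟩
    simp only [intPolynomial_smul_def, Polynomial.map_pow, Polynomial.map_X] at hc
    rw [coe_mapRingHom, hc, hxq]
    ring
  have hgap : q.natDegree + D * k < D * l := by
    have : D * (k + 1) ≤ D * l := Nat.mul_le_mul_left D hkl
    rw [mul_add_one] at this
    omega
  obtain ⟨c', hc'⟩ := mem_map_range_of_mul_X_pow_sub _ hgap hrange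
  exact Submodule.mem_span_singleton.mpr ⟨c', by rw [hxq, intPolynomial_smul_def, ← hc']; rfl⟩

/-- Let `M` be a finitely generated `ℤ[σ]`-submodule of `ℚ[σ]` and let `M̃` be
the union of all `ℤ[σ]`-submodules `N` of `ℚ[σ]` with `N/M` finite. Then `M̃` is
generated by a single element as a `ℤ[σ]`-module. -/
theorem stmt_8 (M : AddSubgroup (Polynomial ℚ))
    (hXM : ∀ x ∈ M, Polynomial.X * x ∈ M)
    (hfg : ∃ F : Finset (Polynomial ℚ), (↑F : Set (Polynomial ℚ)) ⊆ M ∧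
      ∀ x ∈ M, ∃ c : Polynomial ℚ → Polynomial ℤ,
        x = ∑ f ∈ F, (c f).map (Int.castRingHom ℚ) * f) :
    ∃ g : Polynomial ℚ,
      {x : Polynomial ℚ | ∃ N : AddSubgroup (Polynomial ℚ),
          (∀ y ∈ N, Polynomial.X * y ∈ N) ∧ M ≤ N ∧
          (M.addSubgroupOf N).index ≠ 0 ∧ x ∈ N} =
      {x : Polynomial ℚ | ∃ c : Polynomial ℤ, x = c.map (Int.castRingHom ℚ) * g} := by
  obtain ⟨F, hFM, hrep⟩ := hfg
  set P := M.toIntPolynomialSubmodule hXM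
  have hPF : Submodule.span ℤ[X] ↑F = P := by
    refine le_antisymm (Submodule.span_le.mpr hFM) fun x hx => ?_
    obtain ⟨c, rfl⟩ := hrep x hx
    exact Submodule.sum_mem _ fun f hf =>
      intPolynomial_smul_def (c f) f ▸ Submodule.smul_mem _ _ (Submodule.subset_span hf)
  obtain ⟨γ, hPγ, hidx⟩ := exists_le_span_singleton_relIndex_ne_zero ⟨F, hPF⟩
  refine ⟨γ, Set.ext fun x => ⟨?_, ?_⟩⟩
  · rintro ⟨N, hNX, -, hidxN, hxN⟩
    have hPN : P.toAddSubgroup.relIndex (N.toIntPolynomialSubmodule hNX).toAddSubgroup ≠ 0 := by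
      rw [AddSubgroup.toAddSubgroup_toIntPolynomialSubmodule,
        AddSubgroup.toAddSubgroup_toIntPolynomialSubmodule]
      exact hidxN
    have hxN' : x ∈ N.toIntPolynomialSubmodule hNX := hxN
    obtain ⟨c, hc⟩ := Submodule.mem_span_singleton.mp
      (le_span_singleton_of_relIndex_ne_zero hPN hPγ hxN')
    exact ⟨c, by rw [← hc, intPolynomial_smul_def]⟩
  · rintro ⟨c, rfl⟩
    refine ⟨(ℤ[X] ∙ γ).toAddSubgroup, fun y hy => ?_, hPγ, hidx, ?_⟩
    · simpa [intPolynomial_smul_def] using Submodule.smul_mem _ X hy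
    · exact Submodule.mem_span_singleton.mpr ⟨c, intPolynomial_smul_def c γ⟩
end

section
/- For any ideal J of ℤ[σ] (polynomial ring over ℤ in one variable) there exists a principal ideal J' containing J such that J'/J is finite. -/
/-!
Let `g` be a gcd of a finite generating set of `J`. Then `J ≤ (g)`, and multiplication by `g`
identifies `(g)/J` with `ℤ[X]/J₀` for the colon ideal `J₀ = (J : g)`, whose elements have unit gcd.
By Gauss's lemma `J₀` then generates the unit ideal of `ℚ[X]`, so it contains a nonzero integer
`n`. For a prime `p`, `J₀` is not contained in `(p)`, so its image in `𝔽_p[X]` is a nonzero ideal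
and `ℤ[X]/(J₀ + (p))` is finite. Since `(I + (a))/I` is a quotient of `R/(I + (b))` whenever
`ab ∈ I`, induction on the prime factorisation of `n` shows that `ℤ[X]/J₀` is finite.
-/

open Polynomial

namespace Ideal

variable {R : Type*} [CommRing R]

def HasUnitGCD (I : Ideal R) : Prop :=
  ∀ q : R, I ≤ span {q} → IsUnit q

theorem HasUnitGCD.mono {I J : Ideal R} (hI : I.HasUnitGCD) (hIJ : I ≤ J) : J.HasUnitGCD :=
  fun q hq => hI q (hIJ.trans hq)

theorem finite_quotient_iff_index_ne_zero (I : Ideal R) :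
    Finite (R ⧸ I) ↔ I.toAddSubgroup.index ≠ 0 :=
  AddSubgroup.index_ne_zero_iff_finite.symm

theorem relIndex_span_singleton (I : Ideal R) (a : R) :
    I.toAddSubgroup.relIndex (span {a}).toAddSubgroup = (I.colon {a}).toAddSubgroup.index := by
  have hcolon : (I.colon {a}).toAddSubgroup = I.toAddSubgroup.comap (AddMonoidHom.mulLeft a) := by
    ext x
    simp [mul_comm]
  have hspan : (span {a}).toAddSubgroup = (AddMonoidHom.mulLeft a).range := by
    ext x
    simp [mem_span_singleton', mul_comm]
  rw [hcolon, hspan, AddSubgroup.index_comap]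

theorem finite_quotient_of_mul_mem {I : Ideal R} {a b : R} (hab : a * b ∈ I)
    (ha : Finite (R ⧸ (I ⊔ span {a}))) (hb : Finite (R ⧸ (I ⊔ span {b}))) :
    Finite (R ⧸ I) := by
  rw [finite_quotient_iff_index_ne_zero] at ha hb ⊢
  have hb_colon : I ⊔ span {b} ≤ I.colon {a} :=
    sup_le le_colon (span_le.2 (by simpa [mul_comm] using hab))
  have hrel : I.toAddSubgroup.relIndex (I ⊔ span {a}).toAddSubgroup ≠ 0 := by
    rw [Submodule.sup_toAddSubgroup, AddSubgroup.relIndex_sup_left, relIndex_span_singleton]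
    exact ne_zero_of_dvd_ne_zero hb (AddSubgroup.index_dvd_of_le hb_colon)
  rw [← AddSubgroup.relIndex_mul_index (Submodule.toAddSubgroup_mono le_sup_left)]
  exact mul_ne_zero hrel ha

theorem finite_quotient_sup_ker {S : Type*} [CommRing S] [Ring.HasFiniteQuotients S]
    {f : R →+* S} (hf : Function.Surjective f) {I : Ideal R} (hI : ¬ I ≤ RingHom.ker f) :
    Finite (R ⧸ (I ⊔ RingHom.ker f)) := by
  have := Ring.HasFiniteQuotients.finiteQuotient (mt (map_eq_bot_iff_le_ker f).1 hI)
  rw [RingHom.ker_eq_comap_bot, ← comap_map_of_surjective f hf]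
  exact Finite.of_injective _ quotientMap_injective

theorem FG.exists_le_span_singleton_hasUnitGCD_colon [IsDomain R] [NormalizedGCDMonoid R]
    {J : Ideal R} (hJ : J.FG) : ∃ g, J ≤ span {g} ∧ (J.colon {g}).HasUnitGCD := by
  classical
  obtain ⟨s, rfl⟩ := hJ
  set g := s.gcd id
  refine ⟨g, span_le.2 fun f hf => mem_span_singleton.2 (s.gcd_dvd hf), fun q hq => ?_⟩
  by_cases hg : g = 0
  · have htop : (span (s : Set R)).colon {g} = ⊤ := eq_top_iff.2 fun x _ => by simp [hg]
    rwa [htop, top_le_iff, span_singleton_eq_top] at hq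
  · have hgq : g * q ∣ g * 1 := by
      rw [mul_one]
      refine Finset.dvd_gcd fun f hf => ?_
      obtain ⟨x, hx⟩ := Finset.gcd_dvd (f := id) hf
      have hxc : x ∈ (span (s : Set R)).colon {g} := by
        rw [Submodule.mem_colon_singleton, smul_eq_mul, mul_comm, ← hx]
        exact subset_span hf
      rw [show f = g * x from hx]
      exact mul_dvd_mul_left g (mem_span_singleton.1 (hq hxc))
    exact isUnit_of_dvd_one ((mul_dvd_mul_iff_left hg).1 hgq)

end Ideal

namespace Polynomial

instance hasFiniteQuotients {K : Type*} [Field K] [Finite K] :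
    Ring.HasFiniteQuotients K[X] where
  finiteQuotient {I} hI := by
    obtain ⟨f, rfl⟩ := Submodule.IsPrincipal.principal I
    have hf : f ≠ 0 := by rintro rfl; simp at hI
    have : Module.Finite K (K[X] ⧸ Ideal.span {f}) := by
      rw [← Ideal.span_singleton_mul_right_unit
        (isUnit_C.2 (inv_ne_zero (leadingCoeff_ne_zero.2 hf)).isUnit)]
      exact (monic_mul_leadingCoeff_inv hf).finite_quotient
    exact Module.finite_of_finite K

section FractionRing

open scoped nonZeroDivisors

variable {R K : Type*} [CommRing R] [IsDomain R] [Field K] [Algebra R K] [IsFractionRing R K]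

theorem exists_C_mem_of_map_eq_top {I : Ideal R[X]}
    (hI : I.map (mapRingHom (algebraMap R K)) = ⊤) : ∃ r : R, r ≠ 0 ∧ C r ∈ I := by
  let := Polynomial.algebra R K
  have := Polynomial.isLocalization R⁰ K
  have h1 : (1 : K[X]) ∈ I.map (algebraMap R[X] K[X]) := by
    rw [show algebraMap R[X] K[X] = mapRingHom (algebraMap R K) from rfl, hI]
    trivial
  obtain ⟨⟨⟨f, hf⟩, ⟨_, r, hr, rfl⟩⟩, hfr⟩ :=
    (IsLocalization.mem_map_algebraMap_iff (R⁰.map C) K[X]).1 h1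
  have hinj : Function.Injective (algebraMap R[X] K[X]) :=
    map_injective _ (IsFractionRing.injective R K)
  refine ⟨r, nonZeroDivisors.ne_zero hr, ?_⟩
  rw [one_mul, hinj.eq_iff] at hfr
  exact (show C r = f from hfr) ▸ hf

variable [NormalizedGCDMonoid R]

theorem exists_isPrimitive_associated_map {p : K[X]} (hp : p ≠ 0) :
    ∃ q : R[X], q.IsPrimitive ∧ Associated (q.map (algebraMap R K)) p := by
  set w := IsLocalization.integerNormalization R⁰ p
  obtain ⟨b, hb, hw⟩ := IsLocalization.integerNormalization_spec R⁰ p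
  have hw0 : w ≠ 0 := mt IsFractionRing.integerNormalization_eq_zero_iff.1 hp
  have hunit : ∀ r : R, r ≠ 0 → IsUnit (C (algebraMap R K r)) := fun r hr =>
    isUnit_C.2 (IsUnit.mk0 _ ((IsFractionRing.injective R K).ne_iff' (map_zero _) |>.2 hr))
  have hmul : C (algebraMap R K w.content) * w.primPart.map (algebraMap R K) =
      C (algebraMap R K b) * p := by
    rw [← map_C, ← Polynomial.map_mul, ← w.eq_C_content_mul_primPart, hw, Algebra.smul_def,
      algebraMap_apply]
  refine ⟨w.primPart, w.isPrimitive_primPart, ?_⟩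
  exact (associated_unit_mul_left _ _ (hunit _ (mt content_eq_zero_iff.1 hw0))).symm.trans
    (hmul ▸ associated_unit_mul_left _ _ (hunit _ (nonZeroDivisors.ne_zero hb)))

theorem _root_.Ideal.HasUnitGCD.map_eq_top {I : Ideal R[X]} (hI : I.HasUnitGCD) :
    I.map (mapRingHom (algebraMap R K)) = ⊤ := by
  by_contra hne
  obtain ⟨M, hM, hIM⟩ := Ideal.exists_le_maximal _ hne
  have hM0 : M ≠ ⊥ := Ring.ne_bot_of_isMaximal_of_not_isField hM (Polynomial.not_isField K)
  have hπ : Prime (Submodule.IsPrincipal.generator M) :=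
    Submodule.IsPrincipal.prime_generator_of_isPrime M hM0
  obtain ⟨q, hq, hqπ⟩ := exists_isPrimitive_associated_map (R := R) hπ.ne_zero
  have hIq : I ≤ Ideal.span {q} := fun f hf => Ideal.mem_span_singleton.2 <|
    hq.dvd_of_fraction_map_dvd_fraction_map <| hqπ.dvd.trans <|
      (Submodule.IsPrincipal.mem_iff_generator_dvd M).1 (hIM (Ideal.mem_map_of_mem _ hf))
  exact hπ.not_isUnit (hqπ.isUnit ((hI q hIq).map (mapRingHom (algebraMap R K))))

end FractionRing

theorem ker_mapRingHom_intCast_zmod (n : ℕ) :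
    RingHom.ker (mapRingHom (Int.castRingHom (ZMod n))) = Ideal.span {C (n : ℤ)} := by
  rw [ker_mapRingHom, ZMod.ker_intCastRingHom, Ideal.map_span, Set.image_singleton]

theorem Int.finite_quotient_of_natCast_mem {I : Ideal ℤ[X]} (hI : I.HasUnitGCD) {n : ℕ}
    (hn : n ≠ 0) (hnI : C (n : ℤ) ∈ I) : Finite (ℤ[X] ⧸ I) := by
  induction n using Nat.recOnMul generalizing I with
  | zero => exact absurd rfl hn
  | one =>
    rw [Ideal.eq_top_of_isUnit_mem I hnI (by simp)]
    infer_instance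
  | prime p hp =>
    have := Fact.mk hp
    have hker := ker_mapRingHom_intCast_zmod p
    have hI_ker : ¬ I ≤ RingHom.ker (mapRingHom (Int.castRingHom (ZMod p))) := fun h =>
      (isUnit_C.not.2 (Nat.prime_iff_prime_int.1 hp).not_isUnit) (hI _ (hker ▸ h))
    have := Ideal.finite_quotient_sup_ker (map_surjective _ (ZMod.intCast_surjective)) hI_ker
    rwa [hker, sup_eq_left.2 (Ideal.span_le.2 (by simpa using hnI))] at this
  | mul a b iha ihb =>
    rw [Nat.cast_mul, C_mul] at hnI
    have hmem (c : ℤ) : C c ∈ I ⊔ Ideal.span {C c} :=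
      Ideal.mem_sup_right (Ideal.mem_span_singleton_self _)
    exact Ideal.finite_quotient_of_mul_mem hnI
      (iha (hI.mono le_sup_left) (left_ne_zero_of_mul hn) (hmem a))
      (ihb (hI.mono le_sup_left) (right_ne_zero_of_mul hn) (hmem b))

theorem Int.finite_quotient_of_hasUnitGCD {I : Ideal ℤ[X]} (hI : I.HasUnitGCD) :
    Finite (ℤ[X] ⧸ I) := by
  obtain ⟨r, hr, hrI⟩ := exists_C_mem_of_map_eq_top (hI.map_eq_top (K := ℚ))
  refine Int.finite_quotient_of_natCast_mem hI (Int.natAbs_ne_zero.2 hr) ?_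
  rw [← Int.sign_mul_self_eq_natAbs, C_mul]
  exact I.mul_mem_left _ hrI

end Polynomial

/-- For any ideal `J` of `ℤ[σ]` there is a principal ideal `J'` containing `J`
with `J'/J` finite. -/
theorem stmt_9 (J : Ideal (Polynomial ℤ)) :
    ∃ J' : Ideal (Polynomial ℤ), (∃ g : Polynomial ℤ, J' = Ideal.span {g}) ∧ J ≤ J' ∧
      (J.toAddSubgroup.addSubgroupOf J'.toAddSubgroup).index ≠ 0 := by
  obtain ⟨g, hJg, hcolon⟩ :=
    Ideal.FG.exists_le_span_singleton_hasUnitGCD_colon (IsNoetherian.noetherian J)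
  refine ⟨Ideal.span {g}, ⟨g, rfl⟩, hJg, ?_⟩
  rw [← AddSubgroup.relIndex, Ideal.relIndex_span_singleton,
    ← Ideal.finite_quotient_iff_index_ne_zero]
  exact Polynomial.Int.finite_quotient_of_hasUnitGCD hcolon
end

section
/- If N is a principal ℤ[σ]-submodule of ℚ[σ], then ℚ[σ]/N has no finite nonzero ℤ[σ]-submodules. -/
open Polynomial

/-- If `N` is a principal `ℤ[σ]`-submodule of `ℚ[σ]`, then `ℚ[σ]/N` has no
finite nonzero `ℤ[σ]`-submodules: any `ℤ[σ]`-stable subgroup `H ⊇ N` with `H/N`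
finite equals `N`. -/
theorem stmt_10 (g : Polynomial ℚ) (N H : AddSubgroup (Polynomial ℚ))
    (hN : ∀ x : Polynomial ℚ,
      x ∈ N ↔ ∃ c : Polynomial ℤ, x = c.map (Int.castRingHom ℚ) * g)
    (hNH : N ≤ H) (hH : ∀ y ∈ H, Polynomial.X * y ∈ H)
    (hfin : (N.addSubgroupOf H).index ≠ 0) :
    H = N := by
  classical
  refine le_antisymm ?_ hNH
  intro h hh
  set n := (N.addSubgroupOf H).index with hn
  have hpow : ∀ k : ℕ, Polynomial.X ^ k * h ∈ H := by
    intro k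
    induction k with
    | zero => simpa using hh
    | succ k ih =>
        have : Polynomial.X ^ (k + 1) * h = Polynomial.X * (Polynomial.X ^ k * h) := by
          ring
        rw [this]
        exact hH _ ih
  have hnh : n • h ∈ N := by
    have := (N.addSubgroupOf H).nsmul_index_mem (⟨h, hh⟩ : H)
    simpa [AddSubgroup.mem_addSubgroupOf] using this
  obtain ⟨c, hc⟩ := (hN _).mp hnh
  have hn0 : (n : ℚ) ≠ 0 := Nat.cast_ne_zero.mpr hfin
  by_cases hg : g = 0
  · -- N contains 0, and n • h = 0 forces h = 0
    have h0 : n • h = 0 := by rw [hc, hg, mul_zero]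
    have : (n : ℚ) • h = 0 := by rwa [Nat.cast_smul_eq_nsmul]
    have hz : h = 0 := by
      rcases smul_eq_zero.mp this with h1 | h1
      · exact absurd h1 hn0
      · exact h1
    rw [hz]; exact N.zero_mem
  · set q : Polynomial ℚ := (n : ℚ)⁻¹ • (c.map (Int.castRingHom ℚ)) with hq
    have hhq : h = q * g := by
      have : (n : ℚ)⁻¹ • ((n : ℚ) • h) = (n : ℚ)⁻¹ • (c.map (Int.castRingHom ℚ) * g) := by
        rw [Nat.cast_smul_eq_nsmul, hc]
      rw [inv_smul_smul₀ hn0, ← smul_mul_assoc] at this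
      exact this
    -- characterization of membership in N
    have hmem : ∀ p : Polynomial ℚ, p * g ∈ N ↔
        ∀ i, p.coeff i ∈ Set.range ((↑) : ℤ → ℚ) := by
      intro p
      constructor
      · rintro hp i
        obtain ⟨c', hc'⟩ := (hN _).mp hp
        have : p = c'.map (Int.castRingHom ℚ) := mul_right_cancel₀ hg hc'
        rw [this, coeff_map]
        exact ⟨c'.coeff i, rfl⟩
      · intro hi
        have : p ∈ (mapRingHom (Int.castRingHom ℚ)).range := by
          rw [mem_map_range]
          intro i
          obtain ⟨m, hm⟩ := hi i
          exact ⟨m, hm⟩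
        obtain ⟨c', hc'⟩ := this
        exact (hN _).mpr ⟨c', by rw [← hc']; rfl⟩
    by_contra hhn
    -- some coefficient of q is not integral
    have hbad : ∃ j, q.coeff j ∉ Set.range ((↑) : ℤ → ℚ) := by
      by_contra hall
      push_neg at hall
      exact hhn (hhq ▸ (hmem q).mpr hall)
    -- take maximal such j
    obtain ⟨j0, hj0⟩ := hbad
    have hS : (q.support.filter (fun j => q.coeff j ∉ Set.range ((↑) : ℤ → ℚ))).Nonempty := by
      refine ⟨j0, Finset.mem_filter.mpr ⟨?_, hj0⟩⟩
      rw [mem_support_iff]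
      intro h0
      exact hj0 (h0 ▸ ⟨0, by simp⟩)
    set j := (q.support.filter (fun j => q.coeff j ∉ Set.range ((↑) : ℤ → ℚ))).max' hS with hjdef
    have hjbad : q.coeff j ∉ Set.range ((↑) : ℤ → ℚ) :=
      (Finset.mem_filter.mp (Finset.max'_mem _ hS)).2
    have hjmax : ∀ i, j < i → q.coeff i ∈ Set.range ((↑) : ℤ → ℚ) := by
      intro i hji
      by_contra hib
      have hi : i ∈ q.support.filter (fun j => q.coeff j ∉ Set.range ((↑) : ℤ → ℚ)) := by
        refine Finset.mem_filter.mpr ⟨?_, hib⟩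
        rw [mem_support_iff]
        intro h0
        exact hib (h0 ▸ ⟨0, by simp⟩)
      exact absurd (Finset.le_max' _ _ hi) (not_le.mpr hji)
    -- key step: distinct powers give distinct cosets
    have key : ∀ a b : ℕ, a < b → Polynomial.X ^ b * h - Polynomial.X ^ a * h ∉ N := by
      intro a b hab hN'
      have : (Polynomial.X ^ b * q - Polynomial.X ^ a * q) * g ∈ N := by
        have : Polynomial.X ^ b * h - Polynomial.X ^ a * h
            = (Polynomial.X ^ b * q - Polynomial.X ^ a * q) * g := by
          rw [hhq]; ring
        rwa [this] at hN'
      have hco := (hmem _).mp this (b + j)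
      rw [coeff_sub] at hco
      have h1 : (Polynomial.X ^ b * q).coeff (b + j) = q.coeff j := by
        rw [add_comm, coeff_X_pow_mul]
      have h2 : (Polynomial.X ^ a * q).coeff (b + j) = q.coeff (b + j - a) := by
        rw [mul_comm, coeff_mul_X_pow', if_pos (by omega)]
      rw [h1, h2] at hco
      have h3 : q.coeff (b + j - a) ∈ Set.range ((↑) : ℤ → ℚ) := hjmax _ (by omega)
      obtain ⟨m1, hm1⟩ := hco
      obtain ⟨m2, hm2⟩ := h3
      exact hjbad ⟨m1 + m2, by push_cast [hm1, hm2]; ring⟩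
    -- build an injection ℕ → H ⧸ N.addSubgroupOf H
    haveI : Finite (H ⧸ N.addSubgroupOf H) := Nat.finite_of_card_ne_zero hfin
    have hinj : Function.Injective
        (fun k : ℕ => (QuotientAddGroup.mk ⟨Polynomial.X ^ k * h, hpow k⟩ :
          H ⧸ N.addSubgroupOf H)) := by
      intro a b hab
      by_contra hne
      have hsub := (QuotientAddGroup.eq ..).mp hab
      have hsub' : Polynomial.X ^ b * h - Polynomial.X ^ a * h ∈ N := by
        simpa [AddSubgroup.mem_addSubgroupOf, neg_add_eq_sub] using hsub
      rcases lt_trichotomy a b with h' | h' | h'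
      · exact key a b h' hsub'
      · exact hne h'
      · exact key b a h' (by simpa using N.neg_mem hsub')
    haveI := Finite.of_injective _ hinj
    exact _root_.not_finite ℕ
end

section
/- Let S be a commutative ring of characteristic p > 0 with an ideal M generated by b elements, and let q be a power of p. Let φ_q(x) = x^q. Then S·M^{bq} ⊆ S·φ_q(M) ⊆ S·M^q, where S·φ_q(M) denotes the ideal of S generated by the set {m^q : m ∈ M}. -/
/-- Let `S` be a ring of characteristic `p > 0`, `M` an ideal generated by `b`
elements, and `q = p^e`. Then `S·M^{bq} ⊆ S·φ_q(M) ⊆ S·M^q`, where `S·φ_q(M)`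
is the ideal generated by the `q`-th powers of elements of `M`. -/
theorem stmt_13 {S : Type*} [CommRing S] (p : ℕ) (hp : p.Prime) (hchar : (p : S) = 0)
    (e b : ℕ) (hb : 0 < b) (M : Ideal S) (T : Finset S)
    (hT : M = Ideal.span (T : Set S)) (hcard : T.card = b) :
    M ^ (b * p ^ e) ≤ Ideal.span ((fun m : S => m ^ p ^ e) '' (M : Set S)) ∧
      Ideal.span ((fun m : S => m ^ p ^ e) '' (M : Set S)) ≤ M ^ p ^ e := by
  classical
  set q := p ^ e with hq
  have hq1 : 1 ≤ q := Nat.one_le_pow _ _ hp.pos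
  constructor
  · rw [hT, Ideal.span, Submodule.span_pow]
    refine Submodule.span_le.mpr (fun x hx => ?_)
    obtain ⟨f, hf⟩ := Set.mem_pow.mp hx
    set l : List S := List.ofFn (fun i => ((f i : S))) with hl
    have hlen : l.length = b * q := by simp [hl]
    have hmem : ∀ y ∈ l, y ∈ T := by
      intro y hy
      rw [hl, List.mem_ofFn] at hy
      obtain ⟨i, rfl⟩ := hy
      exact (f i).2
    -- pigeonhole: some t ∈ T occurs at least q times in l
    have hpigeon : ∃ t ∈ T, q ≤ l.count t := by
      by_contra hcon
      push_neg at hcon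
      have hsub : l.toFinset ⊆ T := fun y hy => hmem y (List.mem_toFinset.mp hy)
      have hsum : ∑ t ∈ T, l.count t = l.length := by
        rw [← Finset.sum_subset hsub]
        · simpa using Multiset.toFinset_sum_count_eq (l : Multiset S)
        · intro y _ hy
          simp [List.count_eq_zero]
          exact fun h => hy (List.mem_toFinset.mpr h)
      have hlt : ∑ t ∈ T, l.count t ≤ ∑ _t ∈ T, (q - 1) := by
        apply Finset.sum_le_sum
        intro t ht
        exact Nat.le_sub_one_of_lt (hcon t ht)
      rw [hsum, hlen, Finset.sum_const, hcard, smul_eq_mul] at hlt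
      have : b * q ≤ b * (q - 1) := hlt
      have h2 : b * (q - 1) < b * q :=
        mul_lt_mul_of_pos_left (Nat.sub_lt hq1 one_pos) hb
      omega
    obtain ⟨t, htT, htc⟩ := hpigeon
    have hdvd : t ^ q ∣ l.prod := by
      have hle : Multiset.replicate q t ≤ (l : Multiset S) := by
        rw [Multiset.le_iff_count]
        intro a
        rcases eq_or_ne a t with rfl | ha
        · simpa [Multiset.count_replicate] using htc
        · simp [Multiset.count_replicate, Ne.symm ha]
      have := Multiset.prod_dvd_prod_of_le hle
      simpa [Multiset.prod_replicate] using this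
    obtain ⟨c, hc⟩ := hdvd
    have hxeq : x = t ^ q * c := by rw [← hf]; exact hc
    rw [hxeq]
    apply Ideal.mul_mem_right
    apply Ideal.subset_span
    exact ⟨t, Ideal.subset_span htT, rfl⟩
  · rw [Ideal.span_le]
    rintro x ⟨m, hm, rfl⟩
    exact Ideal.pow_mem_pow hm _
end

section
/- Let S be a local ring of characteristic p > 0 with maximal ideal M, and let q be a power of p. Assume M is finitely generated, and that dim_k(S/S·M^q) = n < q, where k = φ_q(S)/φ_q(M) and S is viewed as a module over φ_q(S). Then S has length ≤ n as an S-module. -/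
/-!
Since `a ↦ a ^ q` is additive and sends `M` into `M ^ q`, the quotient `S ⧸ M ^ q` is a vector
space over the residue field `k = S ⧸ M` (isomorphic to `φ_q(S) ⧸ φ_q(M)` via `φ_q`), with
`ā • s = a ^ q * s`; the hypothesis says that it is spanned by the images of the `n` elements
`x i`. Ideals of `S` containing `M ^ q` give `k`-subspaces of it, so a strict chain of such ideals
has at most `n + 1` members. If `M ^ q ≠ 0`, Nakayama makes `M ^ q < M ^ (q - 1) < ⋯ < M ^ 0`
strict, a chain of `q + 1 > n + 1` members. Hence `M ^ q = 0`, and the bound applies to all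
ideals of `S`.
-/

open Module IsLocalRing

theorem Submodule.le_finrank_of_strictMono {K V : Type*} [DivisionRing K] [AddCommGroup V]
    [Module K V] [FiniteDimensional K V] {m : ℕ} {c : Fin (m + 1) → Submodule K V}
    (hc : StrictMono c) : m ≤ finrank K V := by
  have hrank : StrictMono fun j => finrank K (c j) := fun i j hij =>
    Submodule.finrank_lt_finrank_of_lt (hc hij)
  have hmaps : Set.MapsTo (fun j => finrank K (c j)) (Finset.univ : Finset (Fin (m + 1)))
      (Finset.range (finrank K V + 1) : Finset ℕ) := fun j _ => by
    simpa [Nat.lt_succ_iff] using Submodule.finrank_le (c j)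
  simpa using Finset.card_le_card_of_injOn _ hmaps hrank.injective.injOn

theorem Ideal.le_card_of_strictMono_of_forall_eq_sum {k A ι : Type*} [Field k] [CommRing A]
    [Fintype ι] (f : k →+* A) (x : ι → A) (hx : ∀ a, ∃ b : ι → k, a = ∑ i, f (b i) * x i)
    {m : ℕ} {c : Fin (m + 1) → Ideal A} (hc : StrictMono c) : m ≤ Fintype.card ι := by
  let := f.toAlgebra
  have hspan : Submodule.span k (Set.range x) = ⊤ := by
    refine Submodule.eq_top_iff'.mpr fun a => ?_
    obtain ⟨b, rfl⟩ := hx a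
    exact Submodule.sum_mem _ fun i _ =>
      Algebra.smul_def (b i) (x i) ▸ Submodule.smul_mem _ _ (Submodule.subset_span ⟨i, rfl⟩)
  have : FiniteDimensional k A := ⟨hspan ▸ Submodule.fg_span (Set.finite_range x)⟩
  calc m ≤ finrank k A :=
        Submodule.le_finrank_of_strictMono (c := fun j => (c j).restrictScalars k)
          fun i j hij => (Submodule.restrictScalarsEmbedding k A A).strictMono (hc hij)
    _ ≤ Fintype.card ι := by rw [← finrank_top k A, ← hspan]; exact finrank_range_le_card x

theorem Ideal.map_quotientMk_lt_map_quotientMk {R : Type*} [CommRing R] {J I I' : Ideal R}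
    (hJ : J ≤ I) (h : I < I') : I.map (Quotient.mk J) < I'.map (Quotient.mk J) :=
  lt_of_le_of_ne (map_mono h.le) fun heq => h.ne <| by
    rw [← comap_map_mk hJ, heq, comap_map_mk (hJ.trans h.le)]

noncomputable def Ideal.quotientFrobenius {S : Type*} [CommRing S] (I : Ideal S) (p e : ℕ)
    [ExpChar S p] : S ⧸ I →+* S ⧸ I ^ p ^ e :=
  Quotient.lift I ((Quotient.mk _).comp (iterateFrobenius S p e)) fun a ha =>
    Quotient.eq_zero_iff_mem.mpr <| by simpa [iterateFrobenius_def] using pow_mem_pow ha (p ^ e)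

theorem Ideal.le_card_of_strictMono_of_frobenius_span {S ι : Type*} [CommRing S] [Fintype ι]
    {p e : ℕ} [ExpChar S p] (I : Ideal S) [I.IsMaximal] (x : ι → S)
    (hx : ∀ s : S, ∃ b : ι → S, s - ∑ i, b i ^ p ^ e * x i ∈ I ^ p ^ e)
    {m : ℕ} {c : Fin (m + 1) → Ideal S} (hc : StrictMono c) (hle : ∀ j, I ^ p ^ e ≤ c j) :
    m ≤ Fintype.card ι := by
  let := Quotient.field I
  refine le_card_of_strictMono_of_forall_eq_sum (I.quotientFrobenius p e) (Quotient.mk _ ∘ x)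
    (fun a => ?_) (c := fun j => (c j).map (Quotient.mk _))
    fun i j hij => map_quotientMk_lt_map_quotientMk (hle i) (hc hij)
  obtain ⟨s, rfl⟩ := Quotient.mk_surjective a
  obtain ⟨b, hb⟩ := hx s
  refine ⟨Quotient.mk I ∘ b, ?_⟩
  rw [← Quotient.mk_eq_mk_iff_sub_mem] at hb
  simp [hb, quotientFrobenius, iterateFrobenius_def]

theorem Ideal.pow_succ_lt_pow_of_fg {R : Type*} [CommRing R] {I : Ideal R} (hfg : I.FG)
    (hI : I ≤ jacobson ⊥) {i : ℕ} (h : I ^ i ≠ ⊥) : I ^ (i + 1) < I ^ i :=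
  lt_of_le_of_ne (pow_le_pow_right i.le_succ) fun heq => h <|
    Submodule.eq_bot_of_le_smul_of_le_jacobson_bot I _ hfg.pow
      (by rw [smul_eq_mul, ← pow_succ', heq]) hI

theorem Ideal.strictMono_pow_sub {R : Type*} [CommRing R] {I : Ideal R} (hfg : I.FG)
    (hI : I ≤ jacobson ⊥) {q : ℕ} (h : I ^ q ≠ ⊥) :
    StrictMono fun j : Fin (q + 1) => I ^ (q - j) := by
  refine Fin.strictMono_iff_lt_succ.mpr fun j => ?_
  have hsucc : q - j = q - (j + 1) + 1 := by omega
  simp only [Fin.val_castSucc, Fin.val_succ, hsucc]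
  exact pow_succ_lt_pow_of_fg hfg hI fun hbot => h <| le_bot_iff.mp <|
    hbot ▸ pow_le_pow_right (Nat.sub_le q _)

theorem stmt_14_general {S : Type*} [CommRing S] [IsLocalRing S]
    (p : ℕ) (hp : p.Prime) (hchar : CharP S p) (e n : ℕ)
    (hfg : (IsLocalRing.maximalIdeal S).FG)
    (x : Fin n → S)
    (hgen : ∀ s : S, ∃ b : Fin n → S,
      s - ∑ i, b i ^ p ^ e * x i ∈ IsLocalRing.maximalIdeal S ^ p ^ e)
    (hnq : n < p ^ e) :
    ∀ c : Fin (n + 2) → Ideal S, ¬ StrictMono c := by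
  intro c hc
  have := hchar
  have : ExpChar S p := .prime hp
  have hM : maximalIdeal S ≤ Ideal.jacobson ⊥ := maximalIdeal_le_jacobson ⊥
  have hMq : maximalIdeal S ^ p ^ e = ⊥ := by
    by_contra hne
    have hlen := (maximalIdeal S).le_card_of_strictMono_of_frobenius_span x hgen
      (Ideal.strictMono_pow_sub hfg hM hne) fun j => Ideal.pow_le_pow_right (Nat.sub_le _ _)
    simp only [Fintype.card_fin] at hlen
    omega
  have hlen := (maximalIdeal S).le_card_of_strictMono_of_frobenius_span x hgen hc
    fun j => hMq ▸ bot_le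
  simp only [Fintype.card_fin] at hlen
  omega

/-- Let `S` be a local ring of characteristic `p > 0`, with finitely generated
maximal ideal `M`, and `q = p^e`. If `dim_k (S/S·M^q) = n < q`, where
`k = φ_q(S)/φ_q(M)` (expressed via a `k`-basis of `S/S·M^q` of size `n`, with
coefficients from `φ_q(S)` and relations modulo `φ_q(M)`), then `S` has length
`≤ n` as an `S`-module. -/
theorem stmt_14 {S : Type*} [CommRing S] [IsLocalRing S]
    (p : ℕ) (hp : p.Prime) (hchar : CharP S p) (e n : ℕ)
    (hfg : (IsLocalRing.maximalIdeal S).FG)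
    (x : Fin n → S)
    (hgen : ∀ s : S, ∃ b : Fin n → S,
      s - ∑ i, b i ^ p ^ e * x i ∈ IsLocalRing.maximalIdeal S ^ p ^ e)
    (hindep : ∀ b : Fin n → S,
      (∑ i, b i ^ p ^ e * x i) ∈ IsLocalRing.maximalIdeal S ^ p ^ e →
      ∀ i, ∃ m ∈ IsLocalRing.maximalIdeal S, b i ^ p ^ e = m ^ p ^ e)
    (hnq : n < p ^ e) :
    ∀ c : Fin (n + 2) → Ideal S, ¬ StrictMono c :=
  stmt_14_general p hp hchar e n hfg x hgen hnq
end

section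
/- Let k be a field of characteristic p with [k : k^p] = p^e (set e = 0 in characteristic 0 for separable extensions; in general e+1 generators suffice). Let S be a k-algebra generated by m elements, and M a maximal ideal of S with dim_k(S/M) < ∞. Then M is generated by at most m + e + 1 elements. -/
/-!
Present `S` as a quotient of `k[x₁, …, xₘ]`; the preimage of `M` is again a maximal ideal with
finite-dimensional residue field, so it suffices to show that such an ideal `P` of
`k[x₁, …, xₙ] = A[X]`, `A = k[x₁, …, xₙ₋₁]`, needs at most `n` generators. Its contraction
`m` to `A` is of the same kind, and since `(A ⧸ m)[X]` is a principal ideal domain,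
`P = m A[X] + (f)` for a single polynomial `f`; induct on `n`.
-/

open Polynomial Cardinal

universe u v

namespace Ideal

theorem lift_spanRank_le_lift_spanRank_comap {R : Type u} {S : Type v} [CommRing R] [CommRing S]
    {F : Type*} [FunLike F R S] [RingHomClass F R S] {f : F} (hf : Function.Surjective f)
    (I : Ideal S) : lift.{u} I.spanRank ≤ lift.{v} (I.comap f).spanRank := by
  conv_lhs => rw [← map_comap_of_surjective f hf I, ← map_coe]
  exact lift_spanRank_map_le _ _

variable {k A B : Type*} [Field k] [CommRing A] [CommRing B] [Algebra k A] [Algebra k B]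

theorem finiteDimensional_quotient_comap (f : A →ₐ[k] B) (M : Ideal B)
    [FiniteDimensional k (B ⧸ M)] : FiniteDimensional k (A ⧸ M.comap f) :=
  FiniteDimensional.of_injective (quotientMapₐ M f le_rfl).toLinearMap quotientMap_injective

theorem isMaximal_comap_of_finiteDimensional_quotient (f : A →ₐ[k] B) (M : Ideal B)
    [M.IsMaximal] [FiniteDimensional k (B ⧸ M)] : (M.comap f).IsMaximal := by
  have := finiteDimensional_quotient_comap f M
  exact Quotient.maximal_of_isField _ (IsField.of_isDomain_of_finite k _)

end Ideal

namespace Polynomial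

variable {R : Type*} [CommRing R]

theorem exists_eq_map_comap_C_sup_span_singleton (P : Ideal R[X])
    (hP : (P.comap C).IsMaximal) : ∃ f, P = (P.comap C).map C ⊔ Ideal.span {f} := by
  by_cases h : P = (P.comap C).map C
  · exact ⟨0, by simpa using h⟩
  · obtain ⟨f, -, hf⟩ := exists_monic_span_sup_map_eq R P hP h
    exact ⟨f, hf⟩

theorem spanRank_le_spanRank_comap_C_add_one (P : Ideal R[X])
    (hP : (P.comap C).IsMaximal) : P.spanRank ≤ (P.comap C).spanRank + 1 := by
  obtain ⟨f, hf⟩ := exists_eq_map_comap_C_sup_span_singleton P hP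
  calc P.spanRank
      ≤ ((P.comap C).map C).spanRank + (Ideal.span {f}).spanRank := by
        conv_lhs => rw [hf]
        exact Submodule.spanRank_sup_le_sum_spanRank
    _ ≤ (P.comap C).spanRank + 1 := by
        gcongr
        · exact Ideal.spanRank_map_le C _
        · simpa using Submodule.spanRank_span_le_card (R := R[X]) ({f} : Set R[X])

end Polynomial

namespace MvPolynomial

variable {k : Type*} [Field k]

theorem spanRank_le_of_isMaximal {n : ℕ} (M : Ideal (MvPolynomial (Fin n) k)) [M.IsMaximal]
    [FiniteDimensional k (MvPolynomial (Fin n) k ⧸ M)] : M.spanRank ≤ n := by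
  induction n with
  | zero =>
    let e := (isEmptyAlgEquiv k (Fin 0)).toRingEquiv
    have : M.map e = ⊥ := Ideal.eq_bot_of_prime _
    rw [← Ideal.spanRank_map_eq_of_ringEquiv e, this, Submodule.spanRank_bot]
    simp
  | succ n ih =>
    let e : (MvPolynomial (Fin n) k)[X] →ₐ[k] MvPolynomial (Fin (n + 1)) k :=
      (finSuccEquiv k n).symm
    let c : MvPolynomial (Fin n) k →ₐ[k] (MvPolynomial (Fin n) k)[X] :=
      IsScalarTower.toAlgHom k _ _
    set Q := M.comap e
    have := Ideal.finiteDimensional_quotient_comap e M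
    have := Ideal.isMaximal_comap_of_finiteDimensional_quotient e M
    have : FiniteDimensional k (_ ⧸ Q.comap Polynomial.C) :=
      Ideal.finiteDimensional_quotient_comap c Q
    have hmax : (Q.comap Polynomial.C).IsMaximal :=
      Ideal.isMaximal_comap_of_finiteDimensional_quotient c Q
    have hsurj : Function.Surjective e := (finSuccEquiv k n).symm.surjective
    calc M.spanRank ≤ Q.spanRank := by
          simpa using Ideal.lift_spanRank_le_lift_spanRank_comap hsurj M
      _ ≤ (Q.comap Polynomial.C).spanRank + 1 := spanRank_le_spanRank_comap_C_add_one Q hmax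
      _ ≤ n + 1 := by gcongr; exact ih _
      _ = (n + 1 : ℕ) := (Nat.cast_succ n).symm

end MvPolynomial

theorem Submodule.exists_finset_span_eq_of_spanRank_le {R M : Type*} [Semiring R]
    [AddCommMonoid M] [Module R M] {p : Submodule R M} {n : ℕ} (h : p.spanRank ≤ n) :
    ∃ T : Finset M, span R (T : Set M) = p ∧ T.card ≤ n := by
  have fg : p.FG := spanRank_finite_iff_fg.mp (h.trans_lt natCast_lt_aleph0)
  obtain ⟨T, hcard, hspan⟩ := fg.exists_span_finset_card_eq_spanFinrank
  exact ⟨T, hspan, hcard ▸ (fg.spanRank_le_iff n).mp h⟩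

theorem Ideal.spanRank_le_card_of_adjoin_eq_top {k : Type u} {S : Type v} [Field k] [CommRing S]
    [Algebra k S] {G : Finset S} (hG : Algebra.adjoin k (G : Set S) = ⊤) (M : Ideal S)
    [M.IsMaximal] [FiniteDimensional k (S ⧸ M)] : M.spanRank ≤ G.card := by
  let φ : MvPolynomial (Fin G.card) k →ₐ[k] S :=
    MvPolynomial.aeval (Subtype.val ∘ G.equivFin.symm)
  have hφ : Function.Surjective φ := by
    rw [← AlgHom.range_eq_top, ← Algebra.adjoin_range_eq_range_aeval, Set.range_comp,
      Equiv.range_eq_univ, Set.image_univ, Subtype.range_coe]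
    exact hG
  have := finiteDimensional_quotient_comap φ M
  have := isMaximal_comap_of_finiteDimensional_quotient φ M
  rw [← lift_le.{u}, lift_natCast]
  calc lift.{u} M.spanRank ≤ lift.{v} (M.comap φ).spanRank :=
        lift_spanRank_le_lift_spanRank_comap hφ M
    _ ≤ lift.{v} (G.card : Cardinal.{u}) := lift_le.mpr (MvPolynomial.spanRank_le_of_isMaximal _)
    _ = G.card := lift_natCast _

theorem stmt_15_general {k : Type*} [Field k] (e m : ℕ)
    {S : Type*} [CommRing S] [Algebra k S]
    (G : Finset S) (hG : Algebra.adjoin k (G : Set S) = ⊤) (hm : G.card = m)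
    (M : Ideal S) [M.IsMaximal] (hfin : FiniteDimensional k (S ⧸ M)) :
    ∃ T : Finset S, Ideal.span (T : Set S) = M ∧ T.card ≤ m + e + 1 := by
  obtain ⟨T, hT, hcard⟩ :=
    Submodule.exists_finset_span_eq_of_spanRank_le (Ideal.spanRank_le_card_of_adjoin_eq_top hG M)
  exact ⟨T, hT, by omega⟩

/-- Let `k` be a field with `[k : k^p] = p^e` in characteristic `p > 0`
(expressed via a basis of `k` over `k^p` of size `p^e`), or `e = 1` in
characteristic `0`. Let `S` be a `k`-algebra generated by `m` elements and `M`
a maximal ideal with `dim_k (S/M) < ∞`. Then `M` is generated by at most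
`m + e + 1` elements. -/
theorem stmt_15 {k : Type*} [Field k] (e m : ℕ)
    (he : (∃ p : ℕ, p.Prime ∧ CharP k p ∧ ∃ b : Fin (p ^ e) → k,
        (∀ x : k, ∃ c : Fin (p ^ e) → k, x = ∑ i, c i ^ p * b i) ∧
        (∀ c : Fin (p ^ e) → k, ∑ i, c i ^ p * b i = 0 → ∀ i, c i = 0)) ∨
      (CharP k 0 ∧ e = 1))
    {S : Type*} [CommRing S] [Algebra k S]
    (G : Finset S) (hG : Algebra.adjoin k (G : Set S) = ⊤) (hm : G.card = m)
    (M : Ideal S) [M.IsMaximal] (hfin : FiniteDimensional k (S ⧸ M)) :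
    ∃ T : Finset S, Ideal.span (T : Set S) = M ∧ T.card ≤ m + e + 1 :=
  stmt_15_general e m G hG hm M hfin
end

section
/- Let E be a sub-semigroup of ℕ (under addition) generated by a finite set X with greatest element b. Then there exists a subset Y of ℤ/bℤ such that for all n ≥ b(b−1)+1, n ∈ E if and only if (n mod b) ∈ Y. -/
private lemma mem_closure_iff_list' (X : Set ℕ) (n : ℕ) :
    n ∈ AddSubsemigroup.closure X ↔
      ∃ l : List ℕ, l ≠ [] ∧ (∀ x ∈ l, x ∈ X) ∧ l.sum = n := by
  constructor
  · intro h
    refine AddSubsemigroup.closure_induction (fun x hx => ⟨[x], by simp, by simpa, by simp⟩)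
      ?_ h
    rintro x y hx hy ⟨l1, h1, hm1, hs1⟩ ⟨l2, h2, hm2, hs2⟩
    refine ⟨l1 ++ l2, by simp [h1], ?_, by simp [hs1, hs2]⟩
    intro x hx
    rcases List.mem_append.mp hx with h | h
    · exact hm1 x h
    · exact hm2 x h
  · rintro ⟨l, hne, hmem, rfl⟩
    induction l with
    | nil => exact absurd rfl hne
    | cons a l ih =>
      rcases eq_or_ne l [] with rfl | hl
      · simpa using AddSubsemigroup.subset_closure (hmem a (by simp))
      · simp only [List.sum_cons]
        exact add_mem (AddSubsemigroup.subset_closure (hmem a (by simp)))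
          (ih hl (fun x hx => hmem x (by simp [hx])))

private lemma sum_filter_ne_zero' (l : List ℕ) : (l.filter (· ≠ 0)).sum = l.sum := by
  simp only [ne_eq, decide_not]
  induction l with
  | nil => simp
  | cons a l ih =>
    rcases eq_or_ne a 0 with h | h <;> simp [List.filter_cons, h, ih]

/-- Step lemma: from a large `m + b` in the closure, get `m`. -/
private lemma step' (X : Finset ℕ) (b : ℕ) (hb : 1 ≤ b) (hbX : b ∈ X)
    (hmax : ∀ x ∈ X, x ≤ b) (m : ℕ) (hm : b * (b - 1) + 1 ≤ m)
    (h : m + b ∈ AddSubsemigroup.closure (X : Set ℕ)) :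
    m ∈ AddSubsemigroup.closure (X : Set ℕ) := by
  haveI : NeZero b := ⟨by omega⟩
  obtain ⟨l, hne, hmem, hsum⟩ := (mem_closure_iff_list' _ _).mp h
  set l' : List ℕ := l.filter (· ≠ 0) with hl'
  have hmem' : ∀ x ∈ l', x ∈ (X : Set ℕ) := fun x hx => hmem x (List.mem_of_mem_filter hx)
  have hpos : ∀ x ∈ l', 1 ≤ x := by
    intro x hx
    have := List.of_mem_filter hx
    simp at this
    omega
  have hle : ∀ x ∈ l', x ≤ b := fun x hx => hmax x (hmem' x hx)
  have hsum' : l'.sum = m + b := by rw [hl', sum_filter_ne_zero', hsum]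
  have hlen1 : l'.sum ≤ l'.length * b := by
    simpa [smul_eq_mul] using List.sum_le_card_nsmul l' b hle
  have hmgeb : b * b + 1 ≤ m + b := by nlinarith [Nat.sub_add_cancel hb]
  have hklen : b + 1 ≤ l'.length := by nlinarith
  have hcard : Fintype.card (ZMod b) < Fintype.card (Fin (b + 1)) := by
    simp [ZMod.card]
  obtain ⟨i, j, hlt, hfij⟩ : ∃ i j : Fin (b + 1), (i : ℕ) < (j : ℕ) ∧
      (((l'.take i).sum : ℕ) : ZMod b) = (((l'.take j).sum : ℕ) : ZMod b) := by
    obtain ⟨i, j, hij, hfij⟩ := Fintype.exists_ne_map_eq_of_card_lt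
      (fun i : Fin (b + 1) => (((l'.take i).sum : ℕ) : ZMod b)) hcard
    rcases lt_or_gt_of_ne (show (i : ℕ) ≠ (j : ℕ) from fun h => hij (Fin.ext h)) with h | h
    exacts [⟨i, j, h, hfij⟩, ⟨j, i, h, hfij.symm⟩]
  set A := l'.take i with hA
  set S := (l'.take j).drop i with hS
  set B := l'.drop j with hB
  have htj : l'.take (j : ℕ) = A ++ S := by
    have hAA : A = (l'.take (j : ℕ)).take (i : ℕ) := by
      rw [List.take_take, Nat.min_eq_left (le_of_lt hlt)]
    rw [hAA, hS]
    exact (List.take_append_drop _ _).symm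
  have hdecomp : l' = A ++ S ++ B := by
    rw [← htj, hB]; exact (List.take_append_drop _ _).symm
  have hSsub : ∀ x ∈ S, x ∈ l' := by intro x hx; rw [hdecomp]; simp [hx]
  have hAsub : ∀ x ∈ A, x ∈ l' := by intro x hx; rw [hdecomp]; simp [hx]
  have hBsub : ∀ x ∈ B, x ∈ l' := by intro x hx; rw [hdecomp]; simp [hx]
  have hfij' : (((A.sum : ℕ) : ZMod b)) = (((A ++ S).sum : ℕ) : ZMod b) := by
    rw [← htj]; exact hfij
  have hdvd : b ∣ S.sum := by
    rw [← ZMod.natCast_eq_zero_iff]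
    have h2 : ((A.sum : ZMod b)) = (A.sum : ZMod b) + (S.sum : ZMod b) := by
      simpa [Nat.cast_add] using hfij'
    exact left_eq_add.mp h2
  have hSlen : S.length = (j : ℕ) - (i : ℕ) := by
    rw [hS, List.length_drop, List.length_take]
    have : (j : ℕ) ≤ l'.length := by omega
    omega
  have hSpos : 1 ≤ S.sum := by
    have hne2 : S ≠ [] := by
      intro hS0
      rw [hS0] at hSlen
      simp at hSlen
      omega
    rcases S with _ | ⟨a, S⟩
    · exact absurd rfl hne2
    · have := hpos a (hSsub a (by simp))
      simp only [List.sum_cons]; omega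
  obtain ⟨c, hc⟩ := hdvd
  have hc1 : 1 ≤ c := by nlinarith
  refine (mem_closure_iff_list' _ _).mpr
    ⟨A ++ B ++ List.replicate (c - 1) b, ?_, ?_, ?_⟩
  · have hABlen : A.length + B.length = l'.length - ((j:ℕ) - (i:ℕ)) := by
      have := congrArg List.length hdecomp
      simp only [List.length_append] at this
      omega
    intro h0
    have := congrArg List.length h0
    simp only [List.length_append, List.length_replicate, List.length_nil] at this
    have hjb : (j : ℕ) ≤ b := by omega
    omega
  · intro x hx
    simp only [List.mem_append] at hx
    rcases hx with (hx | hx) | hx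
    · exact hmem' x (hAsub x hx)
    · exact hmem' x (hBsub x hx)
    · rw [List.eq_of_mem_replicate hx]; simpa using hbX
  · have hsplit : A.sum + S.sum + B.sum = m + b := by
      rw [← hsum', hdecomp]; simp [add_assoc]
    simp only [List.sum_append, List.sum_replicate, smul_eq_mul]
    have hcb : (c - 1) * b + b = c * b := by
      cases c with
      | zero => omega
      | succ c => simp [Nat.succ_mul]
    have hbc : b * c = c * b := by ring
    omega

private lemma descend' (X : Finset ℕ) (b : ℕ) (hb : 1 ≤ b) (hbX : b ∈ X)
    (hmax : ∀ x ∈ X, x ≤ b) (t : ℕ) :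
    ∀ m : ℕ, b * (b - 1) + 1 ≤ m → m + t * b ∈ AddSubsemigroup.closure (X : Set ℕ) →
      m ∈ AddSubsemigroup.closure (X : Set ℕ) := by
  induction t with
  | zero => intro m _ h; simpa using h
  | succ t ih =>
    intro m hm h
    refine ih m hm (step' X b hb hbX hmax (m + t * b) (by omega) ?_)
    have h2 : m + t * b + b = m + (t + 1) * b := by ring
    rw [h2]; exact h

private lemma ascend' (X : Finset ℕ) (b : ℕ) (hbX : b ∈ X) (t : ℕ) (m : ℕ)
    (h : m ∈ AddSubsemigroup.closure (X : Set ℕ)) :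
    m + t * b ∈ AddSubsemigroup.closure (X : Set ℕ) := by
  induction t with
  | zero => simpa using h
  | succ t ih =>
    have h2 : m + (t + 1) * b = (m + t * b) + b := by ring
    rw [h2]
    exact add_mem ih (AddSubsemigroup.subset_closure (by simpa using hbX))

/-- Let `E ⊆ ℕ` be the additive subsemigroup generated by a finite set `X` with
greatest element `b`. Then for some `Y ⊆ ℤ/bℤ`, for all `n ≥ b(b-1)+1`,
`n ∈ E` iff `n mod b ∈ Y`. -/
theorem stmt_17 (X : Finset ℕ) (b : ℕ) (hb : 1 ≤ b) (hbX : b ∈ X)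
    (hmax : ∀ x ∈ X, x ≤ b) :
    ∃ Y : Set (ZMod b), ∀ n : ℕ, b * (b - 1) + 1 ≤ n →
      (n ∈ AddSubsemigroup.closure (X : Set ℕ) ↔ (n : ZMod b) ∈ Y) := by
  set T := b * (b - 1) + 1 with hT
  refine ⟨{r | ∃ m : ℕ, m ∈ AddSubsemigroup.closure (X : Set ℕ) ∧ T ≤ m ∧ m < T + b ∧
    (m : ZMod b) = r}, ?_⟩
  intro n hn
  constructor
  · intro hnE
    set m := T + (n - T) % b with hm
    have hmlt : m < T + b := by
      have := Nat.mod_lt (n - T) (show 0 < b by omega)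
      omega
    have hdm := Nat.div_add_mod (n - T) b
    have hnm : n = m + ((n - T) / b) * b := by
      have : b * ((n - T) / b) = ((n - T) / b) * b := by ring
      omega
    refine ⟨m, descend' X b hb hbX hmax ((n - T) / b) m (by omega) (hnm ▸ hnE), by omega,
      hmlt, ?_⟩
    rw [hnm]
    push_cast
    simp [ZMod.natCast_self]
  · rintro ⟨m, hmE, hmT, hmlt, hcast⟩
    have hmod : m % b = n % b := by
      rw [ZMod.natCast_eq_natCast_iff] at hcast
      exact hcast
    have hmn : m ≤ n := by
      by_contra hgt
      push_neg at hgt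
      have h1 : m - n < b := by omega
      have h2 : b ∣ m - n := (Nat.modEq_iff_dvd' (le_of_lt hgt)).mp (Nat.ModEq.symm hmod)
      have := Nat.le_of_dvd (by omega) h2
      omega
    have h2 : b ∣ n - m := (Nat.modEq_iff_dvd' hmn).mp hmod
    obtain ⟨t, ht⟩ := h2
    have hnm : n = m + t * b := by
      have : b * t = t * b := by ring
      omega
    rw [hnm]
    exact ascend' X b hbX t m hmE
end

section
/- Let k be a difference field, R = k[a]_σ a difference k-algebra generated by a single element a, with no zero divisors, and L the field of fractions of R. Write a_i = σ^i(a). Suppose F(a_0,…,a_m) = 0 for some nonzero polynomial F ∈ k[X_0,…,X_m]. Then the transcendence degree of L over k is at most m, i.e. a_k is algebraic over k(a_0,…,a_{k−1}) for all k ≥ m. -/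
/-- Key combinatorial lemma: if a nonzero polynomial over `k` vanishes at
`(v 0, …, v (n-1))`, then some `v r` is a root of a nonzero one-variable
polynomial whose coefficients lie in the subfield generated by `k` and the
*later* values `v i'` for `r < i'`. -/
private lemma aux_later {K : Type*} [Field K] (k : Subfield K) :
    ∀ (n : ℕ) (v : Fin n → K) (F : MvPolynomial (Fin n) K),
      (∀ d, MvPolynomial.coeff d F ∈ k) → F ≠ 0 → MvPolynomial.eval v F = 0 →
      ∃ r : Fin n, ∃ q : Polynomial K, q ≠ 0 ∧
        (∀ i, q.coeff i ∈
          Subfield.closure ((k : Set K) ∪ {x | ∃ i' : Fin n, r < i' ∧ x = v i'})) ∧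
        q.eval (v r) = 0 := by
  intro n
  induction n with
  | zero =>
    intro v F hFk hF0 hFa
    exfalso
    apply hF0
    rw [MvPolynomial.eq_C_of_isEmpty F]
    rw [MvPolynomial.eq_C_of_isEmpty F, MvPolynomial.eval_C] at hFa
    rw [hFa, map_zero]
  | succ n ih =>
    intro v F hFk hF0 hFa
    set P := MvPolynomial.finSuccEquiv K n F with hP
    have hP0 : P ≠ 0 := by
      intro h
      apply hF0
      have := congrArg (MvPolynomial.finSuccEquiv K n).symm h
      simpa [hP] using this
    set q0 : Polynomial K := P.map (MvPolynomial.eval (v ∘ Fin.succ)) with hq0def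
    have hvc : (Fin.cons (v 0) (v ∘ Fin.succ) : Fin (n + 1) → K) = v :=
      funext fun i => Fin.cases rfl (fun j => rfl) i
    have hev : q0.eval (v 0) = 0 := by
      have h := MvPolynomial.eval_eq_eval_mv_eval' (v ∘ Fin.succ) (v 0) F
      rw [hvc, hFa] at h
      exact h.symm
    by_cases hq0 : q0 = 0
    · -- all coefficients of `P` vanish after evaluation; recurse on a nonzero one
      set G := P.coeff P.natDegree with hG
      have hG0 : G ≠ 0 := Polynomial.leadingCoeff_ne_zero.mpr hP0
      have hGk : ∀ d, MvPolynomial.coeff d G ∈ k := by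
        intro d
        rw [hG, MvPolynomial.finSuccEquiv_coeff_coeff]
        exact hFk _
      have hGa : MvPolynomial.eval (v ∘ Fin.succ) G = 0 := by
        have : q0.coeff P.natDegree = 0 := by rw [hq0, Polynomial.coeff_zero]
        rwa [hq0def, Polynomial.coeff_map] at this
      obtain ⟨r, q, hq0', hqc, hqe⟩ := ih (v ∘ Fin.succ) G hGk hG0 hGa
      refine ⟨r.succ, q, hq0', ?_, hqe⟩
      intro i
      refine Subfield.closure_mono ?_ (hqc i)
      apply Set.union_subset_union_right
      rintro x ⟨i', hi', rfl⟩
      exact ⟨i'.succ, by simpa using hi', rfl⟩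
    · refine ⟨0, q0, hq0, ?_, hev⟩
      intro i
      rw [hq0def, Polynomial.coeff_map]
      apply MvPolynomial.eval_mem
      · intro d _
        apply Subfield.subset_closure
        left
        rw [MvPolynomial.finSuccEquiv_coeff_coeff]
        exact hFk _
      · intro j
        apply Subfield.subset_closure
        right
        exact ⟨j.succ, Fin.succ_pos j, rfl⟩

/-- Variant of `aux_later` with the coefficients in the subfield generated by
`k` and the *earlier* values `v i'` for `i' < r`. -/
private lemma aux_earlier {K : Type*} [Field K] (k : Subfield K)
    (n : ℕ) (v : Fin n → K) (F : MvPolynomial (Fin n) K)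
    (hFk : ∀ d, MvPolynomial.coeff d F ∈ k) (hF0 : F ≠ 0)
    (hFa : MvPolynomial.eval v F = 0) :
    ∃ r : Fin n, ∃ q : Polynomial K, q ≠ 0 ∧
      (∀ i, q.coeff i ∈
        Subfield.closure ((k : Set K) ∪ {x | ∃ i' : Fin n, i' < r ∧ x = v i'})) ∧
      q.eval (v r) = 0 := by
  have hrev : (Fin.rev ∘ Fin.rev : Fin n → Fin n) = id := funext fun i => Fin.rev_rev i
  set F' := MvPolynomial.rename Fin.rev F with hF'
  have hF'0 : F' ≠ 0 := fun h =>
    hF0 (MvPolynomial.rename_injective _ Fin.rev_injective (by rwa [map_zero]))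
  have hF'k : ∀ d, MvPolynomial.coeff d F' ∈ k := by
    intro d
    have hd : Finsupp.mapDomain Fin.rev (Finsupp.mapDomain Fin.rev d) = d := by
      rw [← Finsupp.mapDomain_comp, hrev, Finsupp.mapDomain_id]
    rw [hF', ← hd, MvPolynomial.coeff_rename_mapDomain _ Fin.rev_injective]
    exact hFk _
  have hF'a : MvPolynomial.eval (v ∘ Fin.rev) F' = 0 := by
    rw [hF', MvPolynomial.eval_rename, Function.comp_assoc, hrev]
    simpa using hFa
  obtain ⟨r, q, hq0, hqc, hqe⟩ := aux_later k n (v ∘ Fin.rev) F' hF'k hF'0 hF'a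
  refine ⟨r.rev, q, hq0, ?_, hqe⟩
  intro i
  refine Subfield.closure_mono ?_ (hqc i)
  apply Set.union_subset_union_right
  rintro x ⟨i', hi', rfl⟩
  exact ⟨i'.rev, by rwa [Fin.rev_lt_rev], rfl⟩

/-- Let `k` be a difference subfield of a difference field `(K, σ)`, `a ∈ K`,
`a_i = σ^i(a)`, and suppose `F(a_0,…,a_m) = 0` for a nonzero polynomial `F` over
`k`. Then the difference field generated by `a` over `k` has transcendence
degree at most `m` over `k`: for every `j ≥ m`, `σ^j(a)` is algebraic over
`k(a_0,…,a_{j-1})`. -/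
theorem stmt_18 {K : Type*} [Field K] (σ : K →+* K)
    (k : Subfield K) (hk : ∀ x ∈ k, σ x ∈ k)
    (a : K) (m : ℕ) (F : MvPolynomial (Fin (m + 1)) K)
    (hFk : ∀ d : Fin (m + 1) →₀ ℕ, MvPolynomial.coeff d F ∈ k)
    (hF0 : F ≠ 0)
    (hFa : MvPolynomial.eval (fun i : Fin (m + 1) => (⇑σ)^[(i : ℕ)] a) F = 0) :
    ∀ j : ℕ, m ≤ j → ∃ q : Polynomial K, q ≠ 0 ∧
      (∀ i : ℕ, q.coeff i ∈
        Subfield.closure ((k : Set K) ∪ {x : K | ∃ i' < j, x = (⇑σ)^[i'] a})) ∧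
      q.eval ((⇑σ)^[j] a) = 0 := by
  obtain ⟨r, q, hq0, hqc, hqe⟩ :=
    aux_earlier k (m + 1) (fun i : Fin (m + 1) => (⇑σ)^[(i : ℕ)] a) F hFk hF0 hFa
  -- the goal predicate
  set Goal : ℕ → Prop := fun j => ∃ q : Polynomial K, q ≠ 0 ∧
      (∀ i : ℕ, q.coeff i ∈
        Subfield.closure ((k : Set K) ∪ {x : K | ∃ i' < j, x = (⇑σ)^[i'] a})) ∧
      q.eval ((⇑σ)^[j] a) = 0 with hGoal
  have main : ∀ j : ℕ, (r : ℕ) ≤ j → Goal j := by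
    intro j hj
    induction j, hj using Nat.le_induction with
    | base =>
      refine ⟨q, hq0, ?_, hqe⟩
      intro i
      refine Subfield.closure_mono ?_ (hqc i)
      apply Set.union_subset_union_right
      rintro x ⟨i', hi', rfl⟩
      exact ⟨(i' : ℕ), hi', rfl⟩
    | succ j hj ihj =>
      obtain ⟨p, hp0, hpc, hpe⟩ := ihj
      refine ⟨p.map σ, Polynomial.map_ne_zero hp0, ?_, ?_⟩
      · intro i
        rw [Polynomial.coeff_map]
        have hle : Subfield.closure ((k : Set K) ∪ {x : K | ∃ i' < j, x = (⇑σ)^[i'] a}) ≤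
            Subfield.comap σ
              (Subfield.closure ((k : Set K) ∪ {x : K | ∃ i' < j + 1, x = (⇑σ)^[i'] a})) := by
          rw [Subfield.closure_le]
          rintro x (hx | ⟨i', hi', rfl⟩)
          · exact Subfield.mem_comap.mpr (Subfield.subset_closure (Or.inl (hk x hx)))
          · exact Subfield.mem_comap.mpr (Subfield.subset_closure
              (Or.inr ⟨i' + 1, by omega, (Function.iterate_succ_apply' σ i' a).symm⟩))
        exact Subfield.mem_comap.mp (hle (hpc i))
      · rw [Function.iterate_succ_apply', Polynomial.eval_map, Polynomial.eval₂_hom, hpe,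
          map_zero]
  intro j hj
  exact main j (le_trans (Nat.le_of_lt_succ r.isLt) hj)
end
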